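/- arXiv:2301.06645 — 6 statements merged into one kernel-verified Lean document; each statement's English description precedes it below -/
import Mathlib

section
/- Let L be an essentially nonnegative irreducible n×n matrix with zero column sums and let α be its positive eigenvector for eigenvalue 0 normalized so Σⱼ αⱼ = 1. Suppose ψ : [0,∞) → ℝⁿ solves the linear ODE system ψ'ⱼ(t) = d Σₖ L_{jk} ψₖ(t) + fⱼ(t), where d > 0 and each |fⱼ(t)| ≤ C e^{-μt} for some constants C, μ > 0, and suppose Σⱼ ψⱼ(t) → N as t → ∞. Then ψⱼ(t) → αⱼ N as t → ∞ for every j. -/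
open Matrix BigOperators

/-- A real square matrix is essentially nonnegative if all off-diagonal entries
are nonnegative. -/
def EssNonneg {n : ℕ} (L : Matrix (Fin n) (Fin n) ℝ) : Prop :=
  ∀ j k, j ≠ k → 0 ≤ L j k

/-- Irreducibility of a matrix with nonnegative off-diagonal entries: no proper
nonempty set of indices is invariant, i.e. the associated directed graph is
strongly connected. -/
def Irred {n : ℕ} (L : Matrix (Fin n) (Fin n) ℝ) : Prop :=
  ∀ S : Set (Fin n), S.Nonempty → S ≠ Set.univ → ∃ j ∉ S, ∃ k ∈ S, L j k ≠ 0

/-- `μ : ℂ` is an eigenvalue of the real matrix `L`. -/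
def IsEig {n : ℕ} (L : Matrix (Fin n) (Fin n) ℝ) (μ : ℂ) : Prop :=
  (Matrix.charpoly (L.map (fun x => (x : ℂ)))).IsRoot μ

/-- The spectral bound of a real matrix: the supremum of real parts of its
(complex) eigenvalues. -/
noncomputable def specBound {n : ℕ} (L : Matrix (Fin n) (Fin n) ℝ) : ℝ :=
  sSup {x : ℝ | ∃ μ : ℂ, IsEig L μ ∧ μ.re = x}

/-- The spectral radius of a real matrix: the supremum of the moduli of its
(complex) eigenvalues. -/
noncomputable def specRadius {n : ℕ} (L : Matrix (Fin n) (Fin n) ℝ) : ℝ :=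
  sSup {x : ℝ | ∃ μ : ℂ, IsEig L μ ∧ ‖μ‖ = x}


section AuxStmt7
open Matrix BigOperators NormedSpace

attribute [local instance] Matrix.linftyOpSemiNormedRing Matrix.linftyOpNormedRing
  Matrix.linftyOpNormedAlgebra

variable {n : ℕ}

/-- entry evaluation as a continuous linear map -/
noncomputable def entryCLM (j k : Fin n) : Matrix (Fin n) (Fin n) ℝ →L[ℝ] ℝ :=
  LinearMap.toContinuousLinearMap
    { toFun := fun X => X j k
      map_add' := fun _ _ => rfl
      map_smul' := fun _ _ => rfl }

noncomputable def colCLM (k : Fin n) : Matrix (Fin n) (Fin n) ℝ →L[ℝ] ℝ :=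
  LinearMap.toContinuousLinearMap
    { toFun := fun X => ∑ j, X j k
      map_add' := fun X Y => by simp [Finset.sum_add_distrib]
      map_smul' := fun c X => by simp [Finset.mul_sum] }

theorem clm_exp (φ : Matrix (Fin n) (Fin n) ℝ →L[ℝ] ℝ) (B : Matrix (Fin n) (Fin n) ℝ) :
    φ (exp B) = ∑' m : ℕ, ((m.factorial : ℝ)⁻¹ * φ (B ^ m)) := by
  rw [exp_eq_tsum ℝ]
  rw [φ.map_tsum (expSeries_summable' (𝕂 := ℝ) B)]
  simp

theorem clm_exp_summable (φ : Matrix (Fin n) (Fin n) ℝ →L[ℝ] ℝ) (B : Matrix (Fin n) (Fin n) ℝ) :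
    Summable fun m : ℕ => ((m.factorial : ℝ)⁻¹ * φ (B ^ m)) := by
  have := (expSeries_summable' (𝕂 := ℝ) B).map φ.toLinearMap.toAddMonoidHom φ.continuous
  simpa [Function.comp_def, _root_.map_smul, smul_eq_mul] using this

theorem pow_entry_nonneg {B : Matrix (Fin n) (Fin n) ℝ} (hB : ∀ j k, 0 ≤ B j k) :
    ∀ m : ℕ, ∀ j k, 0 ≤ (B ^ m) j k := by
  intro m
  induction m with
  | zero => intro j k; by_cases h : j = k <;> simp [Matrix.one_apply, h]
  | succ m ih =>
    intro j k
    rw [pow_succ, Matrix.mul_apply]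
    exact Finset.sum_nonneg fun i _ => mul_nonneg (ih j i) (hB i k)

theorem exp_entry_eq (B : Matrix (Fin n) (Fin n) ℝ) (j k : Fin n) :
    exp B j k = ∑' m : ℕ, ((m.factorial : ℝ)⁻¹ * (B ^ m) j k) :=
  clm_exp (entryCLM j k) B

theorem exp_entry_nonneg {B : Matrix (Fin n) (Fin n) ℝ} (hB : ∀ j k, 0 ≤ B j k) (j k : Fin n) :
    0 ≤ exp B j k := by
  rw [exp_entry_eq]
  exact tsum_nonneg fun m => mul_nonneg (by positivity) (pow_entry_nonneg hB m j k)

theorem exp_entry_pos {B : Matrix (Fin n) (Fin n) ℝ} (hB : ∀ j k, 0 ≤ B j k) (j k : Fin n)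
    (h : ∃ m, 0 < (B ^ m) j k) : 0 < exp B j k := by
  obtain ⟨m, hm⟩ := h
  rw [exp_entry_eq]
  have hsum := clm_exp_summable (entryCLM j k) B
  have hle := Summable.le_tsum (show Summable fun m : ℕ => ((m.factorial : ℝ)⁻¹ * (B ^ m) j k) from hsum)
    m (fun i _ => mul_nonneg (by positivity) (pow_entry_nonneg hB i j k))
  calc (0:ℝ) < (m.factorial : ℝ)⁻¹ * (B ^ m) j k := by positivity
  _ ≤ _ := hle

theorem colsum_pow_eq_zero {B : Matrix (Fin n) (Fin n) ℝ} (hcol : ∀ k, ∑ j, B j k = 0) :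
    ∀ m : ℕ, 0 < m → ∀ k, ∑ j, (B ^ m) j k = 0 := by
  intro m
  induction m with
  | zero => intro h; exact absurd h (lt_irrefl 0)
  | succ m ih =>
    intro _ k
    rcases Nat.eq_zero_or_pos m with hm | hm
    · subst hm; simpa using hcol k
    · rw [pow_succ]
      have : ∀ j, (B ^ m * B) j k = ∑ i, (B ^ m) j i * B i k := fun j => Matrix.mul_apply
      simp_rw [this]
      rw [Finset.sum_comm]
      have : ∀ i, ∑ j, (B ^ m) j i * B i k = (∑ j, (B ^ m) j i) * B i k := by
        intro i; rw [Finset.sum_mul]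
      simp_rw [this, ih hm]
      simp

theorem exp_colsum_one {B : Matrix (Fin n) (Fin n) ℝ} (hcol : ∀ k, ∑ j, B j k = 0) (k : Fin n) :
    ∑ j, exp B j k = 1 := by
  have h := clm_exp (colCLM k) B
  have hc : ∀ X : Matrix (Fin n) (Fin n) ℝ, colCLM k X = ∑ j, X j k := fun X => rfl
  have : (∑ j, exp B j k) = ∑' m : ℕ, ((m.factorial : ℝ)⁻¹ * ∑ j, (B ^ m) j k) := by
    rw [← hc]; rw [h]; simp_rw [hc]
  rw [this]
  rw [tsum_eq_single 0 (fun m hm => by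
    rw [colsum_pow_eq_zero hcol m (Nat.pos_of_ne_zero hm) k, mul_zero])]
  simp [Matrix.one_apply]

theorem strong_conn {A : Matrix (Fin n) (Fin n) ℝ}
    (hirr : ∀ S : Set (Fin n), S.Nonempty → S ≠ Set.univ → ∃ j ∉ S, ∃ k ∈ S, A j k ≠ 0)
    {M : Matrix (Fin n) (Fin n) ℝ} (hM : ∀ j k, 0 ≤ M j k)
    (hMA : ∀ j k, j ≠ k → M j k = A j k) :
    ∀ j k, ∃ m, 0 < (M ^ m) j k := by
  intro j k
  set S : Set (Fin n) := {j | ∃ m, 0 < (M ^ m) j k} with hS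
  have hkS : k ∈ S := ⟨0, by simp [Matrix.one_apply]⟩
  suffices h : S = Set.univ by
    have : j ∈ S := h ▸ Set.mem_univ j
    exact this
  by_contra hne
  obtain ⟨j', hj', k', hk', hA⟩ := hirr S ⟨k, hkS⟩ hne
  have hjk' : j' ≠ k' := fun h => hj' (h ▸ hk')
  have hMpos : 0 < M j' k' := lt_of_le_of_ne (hM j' k') (fun h => hA ((hMA j' k' hjk') ▸ h.symm))
  obtain ⟨m, hm⟩ := hk'
  apply hj'
  refine ⟨m + 1, ?_⟩
  rw [pow_succ', Matrix.mul_apply]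
  have hle : M j' k' * (M ^ m) k' k ≤ ∑ i, M j' i * (M ^ m) i k :=
    Finset.single_le_sum (f := fun i => M j' i * (M ^ m) i k)
      (fun i _ => mul_nonneg (hM j' i) (pow_entry_nonneg hM m i k)) (Finset.mem_univ k')
  exact lt_of_lt_of_le (mul_pos hMpos hm) hle

theorem exp_shift (c : ℝ) (B : Matrix (Fin n) (Fin n) ℝ) :
    exp B = Real.exp (-c) • exp (B + c • 1) := by
  have hcomm : Commute (B + c • (1 : Matrix (Fin n) (Fin n) ℝ)) ((-c) • 1) := by
    unfold Commute SemiconjBy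
    simp [Matrix.mul_smul, Matrix.smul_mul]
  have h1 : B = (B + c • 1) + (-c) • (1 : Matrix (Fin n) (Fin n) ℝ) := by
    rw [neg_smul]; abel
  conv_lhs => rw [h1]
  rw [Matrix.exp_add_of_commute _ _ hcomm]
  have h2 : ((-c) • (1 : Matrix (Fin n) (Fin n) ℝ)) = Matrix.diagonal (fun _ => -c) := by
    rw [Matrix.smul_one_eq_diagonal]
  rw [h2, Matrix.exp_diagonal]
  have h3 : exp (fun _ : Fin n => -c) = fun _ : Fin n => Real.exp (-c) := by
    funext i
    rw [Real.exp_eq_exp_ℝ, Pi.coe_exp]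
  rw [h3]
  ext i k
  simp [Matrix.diagonal, Matrix.mul_apply, Matrix.one_apply, mul_comm]

noncomputable def n1 {n : ℕ} (v : Fin n → ℝ) : ℝ := ∑ j, |v j|

theorem n1_nonneg (v : Fin n → ℝ) : 0 ≤ n1 v :=
  Finset.sum_nonneg fun j _ => abs_nonneg _

theorem abs_le_n1 (v : Fin n → ℝ) (j : Fin n) : |v j| ≤ n1 v :=
  Finset.single_le_sum (fun i (_ : i ∈ Finset.univ) => abs_nonneg (v i)) (Finset.mem_univ j)

theorem sum_mulVec (B : Matrix (Fin n) (Fin n) ℝ) (v : Fin n → ℝ) :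
    ∑ j, B.mulVec v j = ∑ k, (∑ j, B j k) * v k := by
  simp_rw [Matrix.mulVec, dotProduct]
  rw [Finset.sum_comm]
  simp_rw [Finset.sum_mul]

theorem sum_mulVec_eq {B : Matrix (Fin n) (Fin n) ℝ} (hcol : ∀ k, ∑ j, B j k = 1)
    (v : Fin n → ℝ) : ∑ j, B.mulVec v j = ∑ k, v k := by
  rw [sum_mulVec]; simp_rw [hcol, one_mul]

theorem n1_mulVec_le {B : Matrix (Fin n) (Fin n) ℝ} (hB : ∀ j k, 0 ≤ B j k)
    (hcol : ∀ k, ∑ j, B j k = 1) (v : Fin n → ℝ) : n1 (B.mulVec v) ≤ n1 v := by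
  unfold n1
  calc ∑ j, |B.mulVec v j| ≤ ∑ j, ∑ k, B j k * |v k| := by
        refine Finset.sum_le_sum fun j _ => ?_
        rw [Matrix.mulVec, dotProduct]
        refine (Finset.abs_sum_le_sum_abs _ _).trans ?_
        refine Finset.sum_le_sum fun k _ => ?_
        rw [abs_mul, abs_of_nonneg (hB j k)]
  _ = ∑ k, (∑ j, B j k) * |v k| := by rw [Finset.sum_comm]; simp_rw [Finset.sum_mul]
  _ = ∑ k, |v k| := by simp_rw [hcol, one_mul]

theorem n1_contract {B : Matrix (Fin n) (Fin n) ℝ} {ε : ℝ} (hε : 0 ≤ ε)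
    (hB : ∀ j k, ε ≤ B j k) (hcol : ∀ k, ∑ j, B j k = 1) (v : Fin n → ℝ)
    (hv : ∑ k, v k = 0) : n1 (B.mulVec v) ≤ (1 - n * ε) * n1 v := by
  have hBv : ∀ j, B.mulVec v j = ∑ k, (B j k - ε) * v k := by
    intro j
    rw [Matrix.mulVec, dotProduct]
    simp_rw [sub_mul]
    rw [Finset.sum_sub_distrib, ← Finset.mul_sum, hv, mul_zero, sub_zero]
  unfold n1
  calc ∑ j, |B.mulVec v j| ≤ ∑ j, ∑ k, (B j k - ε) * |v k| := by
        refine Finset.sum_le_sum fun j _ => ?_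
        rw [hBv j]
        refine (Finset.abs_sum_le_sum_abs _ _).trans ?_
        refine Finset.sum_le_sum fun k _ => ?_
        rw [abs_mul, abs_of_nonneg (sub_nonneg.mpr (hB j k))]
  _ = ∑ k, (∑ j, (B j k - ε)) * |v k| := by rw [Finset.sum_comm]; simp_rw [Finset.sum_mul]
  _ = ∑ k, (1 - n * ε) * |v k| := by
        congr 1; funext k
        rw [Finset.sum_sub_distrib, hcol, Finset.sum_const, Finset.card_univ, Fintype.card_fin,
          nsmul_eq_mul]
  _ = (1 - n * ε) * n1 v := by rw [← Finset.mul_sum]; rfl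

theorem key_decay (A : Matrix (Fin n) (Fin n) ℝ) (hn : 0 < n)
    (hoff : ∀ j k, j ≠ k → 0 ≤ A j k)
    (hirr : ∀ S : Set (Fin n), S.Nonempty → S ≠ Set.univ → ∃ j ∉ S, ∃ k ∈ S, A j k ≠ 0)
    (hcol : ∀ k, ∑ j, A j k = 0) :
    ∃ K lam : ℝ, 0 < K ∧ 0 < lam ∧ ∀ t ≥ (0:ℝ), ∀ v : Fin n → ℝ, ∑ j, v j = 0 →
      n1 ((exp (t • A)).mulVec v) ≤ K * Real.exp (-lam * t) * n1 v := by
  haveI : NeZero n := ⟨hn.ne'⟩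
  -- the shift constant
  set c : ℝ := 1 + ∑ j, |A j j| with hc
  have hcpos : ∀ j, 0 ≤ A j j + c := by
    intro j
    have h1 : |A j j| ≤ ∑ i, |A i i| :=
      Finset.single_le_sum (fun i (_ : i ∈ Finset.univ) => abs_nonneg (A i i))
        (Finset.mem_univ j)
    have h2 : -A j j ≤ |A j j| := neg_le_abs _
    nlinarith
  -- nonnegativity of shifted matrices
  have hMnn : ∀ t : ℝ, 0 ≤ t → ∀ j k, 0 ≤ (t • A + (t * c) • (1 : Matrix (Fin n) (Fin n) ℝ)) j k := by
    intro t ht j k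
    by_cases h : j = k
    · subst h
      simp only [Matrix.add_apply, Matrix.smul_apply, Matrix.one_apply_eq, smul_eq_mul, mul_one]
      calc (0:ℝ) ≤ t * (A j j + c) := mul_nonneg ht (hcpos j)
      _ = t * A j j + t * c := by ring
    · simp only [Matrix.add_apply, Matrix.smul_apply, Matrix.one_apply_ne h, smul_eq_mul, mul_zero,
        add_zero]
      exact mul_nonneg ht (hoff j k h)
  have hshift : ∀ t : ℝ, exp (t • A) =
      Real.exp (-(t * c)) • exp (t • A + (t * c) • 1) := fun t => exp_shift (t * c) (t • A)
  -- entries of exp (t • A) are nonnegative for t ≥ 0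
  have hEnn : ∀ t : ℝ, 0 ≤ t → ∀ j k, 0 ≤ exp (t • A) j k := by
    intro t ht j k
    rw [hshift t]
    simp only [Matrix.smul_apply, smul_eq_mul]
    exact mul_nonneg (Real.exp_nonneg _) (exp_entry_nonneg (hMnn t ht) j k)
  -- column sums of exp (t • A) are 1
  have hEcol : ∀ t : ℝ, ∀ k, ∑ j, exp (t • A) j k = 1 := by
    intro t k
    refine exp_colsum_one (fun k' => ?_) k
    simp only [Matrix.smul_apply, smul_eq_mul]
    rw [← Finset.mul_sum, hcol k', mul_zero]
  -- positivity of B = exp A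
  set B : Matrix (Fin n) (Fin n) ℝ := exp ((1:ℝ) • A) with hB
  have hBpos : ∀ j k, 0 < B j k := by
    intro j k
    rw [hB, hshift 1]
    simp only [Matrix.smul_apply, smul_eq_mul]
    refine mul_pos (Real.exp_pos _) ?_
    refine exp_entry_pos (hMnn 1 zero_le_one) j k ?_
    refine strong_conn hirr (hMnn 1 zero_le_one) (fun j' k' hne => ?_) j k
    simp [Matrix.add_apply, Matrix.smul_apply, Matrix.one_apply_ne hne]
  have hBnn : ∀ j k, 0 ≤ B j k := fun j k => (hBpos j k).le
  have hBcol : ∀ k, ∑ j, B j k = 1 := fun k => hEcol 1 k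
  -- the minimum entry
  obtain ⟨p, -, hpmin⟩ := Finset.exists_min_image (Finset.univ : Finset (Fin n × Fin n))
    (fun p => B p.1 p.2) (Finset.univ_nonempty)
  set ε : ℝ := B p.1 p.2 / 2 with hε
  have hεpos : 0 < ε := half_pos (hBpos p.1 p.2)
  have hεle : ∀ j k, ε ≤ B j k := by
    intro j k
    have := hpmin (j, k) (Finset.mem_univ _)
    have h2 : ε ≤ B p.1 p.2 := half_le_self (hBpos p.1 p.2).le
    exact h2.trans this
  set ρ : ℝ := 1 - n * ε with hρ
  have hρlt : ρ < 1 := by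
    have : 0 < (n:ℝ) * ε := mul_pos (by exact_mod_cast hn) hεpos
    linarith
  have hρpos : 0 < ρ := by
    have hsum : (n:ℝ) * (2 * ε) ≤ 1 := by
      have : ∀ j : Fin n, 2 * ε ≤ B j p.2 := by
        intro j
        rw [hε]; rw [mul_div_cancel₀]
        · exact hpmin (j, p.2) (Finset.mem_univ _)
        · norm_num
      calc (n:ℝ) * (2 * ε) = ∑ _j : Fin n, (2 * ε) := by
            rw [Finset.sum_const, Finset.card_univ, Fintype.card_fin, nsmul_eq_mul]
      _ ≤ ∑ j, B j p.2 := Finset.sum_le_sum fun j _ => this j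
      _ = 1 := hBcol p.2
    have hn1 : (1:ℝ) ≤ n := by exact_mod_cast hn
    nlinarith
  -- one-step contraction
  have hstep : ∀ v : Fin n → ℝ, ∑ j, v j = 0 →
      n1 (B.mulVec v) ≤ ρ * n1 v ∧ ∑ j, B.mulVec v j = 0 := by
    intro v hv
    exact ⟨n1_contract hεpos.le hεle hBcol v hv, by rw [sum_mulVec_eq hBcol, hv]⟩
  -- iterate
  have hiter : ∀ m : ℕ, ∀ v : Fin n → ℝ, ∑ j, v j = 0 →
      n1 ((B ^ m).mulVec v) ≤ ρ ^ m * n1 v ∧ ∑ j, (B ^ m).mulVec v j = 0 := by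
    intro m
    induction m with
    | zero => intro v hv; simp [Matrix.one_mulVec, hv, n1_nonneg]
    | succ m ih =>
      intro v hv
      obtain ⟨ih1, ih2⟩ := ih v hv
      have hrw : (B ^ (m+1)).mulVec v = B.mulVec ((B ^ m).mulVec v) := by
        rw [Matrix.mulVec_mulVec, ← pow_succ']
      obtain ⟨h1, h2⟩ := hstep ((B ^ m).mulVec v) ih2
      constructor
      · rw [hrw]
        calc n1 (B.mulVec ((B ^ m).mulVec v)) ≤ ρ * n1 ((B ^ m).mulVec v) := h1
        _ ≤ ρ * (ρ ^ m * n1 v) := by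
            exact mul_le_mul_of_nonneg_left ih1 hρpos.le
        _ = ρ ^ (m+1) * n1 v := by ring
      · rw [hrw]; exact h2
  -- exp of natural multiples
  have hnat : ∀ m : ℕ, exp ((m : ℝ) • A) = B ^ m := by
    intro m
    show exp ((m:ℝ) • A) = (exp ((1:ℝ) • A)) ^ m
    rw [one_smul, ← Matrix.exp_nsmul m A, Nat.cast_smul_eq_nsmul]
  refine ⟨ρ⁻¹, -Real.log ρ, inv_pos.mpr hρpos, neg_pos.mpr (Real.log_neg hρpos hρlt), ?_⟩
  intro t ht v hv
  have hr0 : 0 ≤ t - (⌊t⌋₊ : ℝ) := sub_nonneg.mpr (Nat.floor_le ht)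
  have hsplit : exp (t • A) = exp ((t - ⌊t⌋₊) • A) * exp ((⌊t⌋₊:ℝ) • A) := by
    rw [← Matrix.exp_add_of_commute]
    · rw [← add_smul]; ring_nf
    · exact ((Commute.refl A).smul_left _).smul_right _
  rw [hsplit, ← Matrix.mulVec_mulVec]
  have h1 : n1 (exp ((t - ⌊t⌋₊) • A) *ᵥ (exp ((⌊t⌋₊:ℝ) • A) *ᵥ v)) ≤
      n1 (exp ((⌊t⌋₊:ℝ) • A) *ᵥ v) :=
    n1_mulVec_le (hEnn _ hr0) (hEcol _) _
  have h2 : n1 (exp ((⌊t⌋₊:ℝ) • A) *ᵥ v) ≤ ρ ^ ⌊t⌋₊ * n1 v := by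
    rw [hnat ⌊t⌋₊]; exact (hiter ⌊t⌋₊ v hv).1
  have h3 : ρ ^ ⌊t⌋₊ ≤ ρ⁻¹ * Real.exp (-(-Real.log ρ) * t) := by
    have hlog : Real.log ρ < 0 := Real.log_neg hρpos hρlt
    have hm1 : t - 1 ≤ (⌊t⌋₊:ℝ) := by
      have h := Nat.lt_floor_add_one t
      linarith
    have hmul : (⌊t⌋₊:ℝ) * Real.log ρ ≤ (t - 1) * Real.log ρ :=
      mul_le_mul_of_nonpos_right hm1 hlog.le
    calc ρ ^ ⌊t⌋₊ = Real.exp ((⌊t⌋₊:ℝ) * Real.log ρ) := by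
          rw [Real.exp_nat_mul, Real.exp_log hρpos]
    _ ≤ Real.exp ((t - 1) * Real.log ρ) := Real.exp_le_exp.mpr hmul
    _ = ρ⁻¹ * Real.exp (-(-Real.log ρ) * t) := by
          rw [← Real.exp_log (inv_pos.mpr hρpos), ← Real.exp_add, Real.log_inv]
          ring_nf
  calc n1 (exp ((t - ⌊t⌋₊) • A) *ᵥ (exp ((⌊t⌋₊:ℝ) • A) *ᵥ v)) ≤ ρ ^ ⌊t⌋₊ * n1 v :=
        le_trans h1 h2
  _ ≤ (ρ⁻¹ * Real.exp (-(-Real.log ρ) * t)) * n1 v :=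
        mul_le_mul_of_nonneg_right h3 (n1_nonneg v)
  _ = _ := by ring

theorem entryCLM_apply (j k : Fin n) (X : Matrix (Fin n) (Fin n) ℝ) :
    entryCLM j k X = X j k := rfl

theorem hasDerivAt_exp_entry (A : Matrix (Fin n) (Fin n) ℝ) (t s : ℝ) (j k : Fin n) :
    HasDerivAt (fun u : ℝ => exp ((t - u) • A) j k)
      (-((exp ((t - s) • A) * A) j k)) s := by
  have h1 : HasDerivAt (fun u : ℝ => exp (u • A)) (exp ((t - s) • A) * A) (t - s) :=
    hasDerivAt_exp_smul_const A (t - s)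
  have h2 : HasDerivAt (fun u : ℝ => t - u) (-1) s := by
    simpa using (hasDerivAt_id s).const_sub t
  have h3 : HasDerivAt (fun u : ℝ => exp ((t - u) • A))
      ((-1 : ℝ) • (exp ((t - s) • A) * A)) s := HasDerivAt.scomp s h1 h2
  have h4 := (entryCLM j k).hasFDerivAt.comp_hasDerivAt s h3
  have : entryCLM j k ((-1 : ℝ) • (exp ((t - s) • A) * A)) =
      -((exp ((t - s) • A) * A) j k) := by
    rw [entryCLM_apply]; simp
  replace h4 := h4.congr_deriv this
  exact h4

theorem hasDerivWithinAt_expMulVec (A : Matrix (Fin n) (Fin n) ℝ) (t : ℝ)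
    (g h : ℝ → Fin n → ℝ) (s : ℝ)
    (hg : ∀ k, HasDerivWithinAt (fun u => g u k) (A.mulVec (g s) k + h s k) (Set.Icc 0 t) s)
    (j : Fin n) :
    HasDerivWithinAt (fun u => ∑ k, exp ((t - u) • A) j k * g u k)
      ((exp ((t - s) • A)).mulVec (h s) j) (Set.Icc 0 t) s := by
  set E := exp ((t - s) • A) with hE
  have base : ∀ k ∈ Finset.univ, HasDerivWithinAt (fun u => exp ((t - u) • A) j k * g u k)
      (-((E * A) j k) * g s k + E j k * (A.mulVec (g s) k + h s k)) (Set.Icc 0 t) s :=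
    fun k _ => ((hasDerivAt_exp_entry A t s j k).hasDerivWithinAt).mul (hg k)
  have hsum := HasDerivWithinAt.fun_sum base
  have hval : ∑ k, (-((E * A) j k) * g s k + E j k * (A.mulVec (g s) k + h s k)) =
      E.mulVec (h s) j := by
    have e1 : ∑ k, (E * A) j k * g s k = ∑ k, E j k * A.mulVec (g s) k := by
      show (E * A).mulVec (g s) j = E.mulVec (A.mulVec (g s)) j
      rw [Matrix.mulVec_mulVec]
    calc ∑ k, (-((E * A) j k) * g s k + E j k * (A.mulVec (g s) k + h s k))
        = ∑ k, (E j k * h s k + (E j k * A.mulVec (g s) k - (E * A) j k * g s k)) := by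
          refine Finset.sum_congr rfl fun k _ => by ring
      _ = (∑ k, E j k * h s k) +
          ((∑ k, E j k * A.mulVec (g s) k) - ∑ k, (E * A) j k * g s k) := by
          rw [Finset.sum_add_distrib, Finset.sum_sub_distrib]
      _ = ∑ k, E j k * h s k := by rw [← e1]; ring
      _ = E.mulVec (h s) j := rfl
  rw [hval] at hsum
  exact hsum

theorem stmt_7' {n : ℕ} (L : Matrix (Fin n) (Fin n) ℝ)
    (hess : ∀ j k, j ≠ k → 0 ≤ L j k)
    (hirr : ∀ S : Set (Fin n), S.Nonempty → S ≠ Set.univ → ∃ j ∉ S, ∃ k ∈ S, L j k ≠ 0)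
    (hcol : ∀ k, ∑ j, L j k = 0)
    (α : Fin n → ℝ) (hαpos : ∀ j, 0 < α j) (hαsum : ∑ j, α j = 1)
    (hαeig : L.mulVec α = 0)
    (d : ℝ) (hd : 0 < d)
    (ψ f : ℝ → Fin n → ℝ) (C μ N : ℝ) (hC : 0 < C) (hμ : 0 < μ)
    (hode : ∀ j, ∀ t ∈ Set.Ici (0 : ℝ),
      HasDerivWithinAt (fun s => ψ s j)
        (d * ∑ k, L j k * ψ t k + f t j) (Set.Ici (0 : ℝ)) t)
    (hf : ∀ j, ∀ t ∈ Set.Ici (0 : ℝ), |f t j| ≤ C * Real.exp (-μ * t))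
    (hsum : Filter.Tendsto (fun t => ∑ j, ψ t j) Filter.atTop (nhds N)) :
    ∀ j, Filter.Tendsto (fun t => ψ t j) Filter.atTop (nhds (α j * N)) := by
  intro j0
  have hn : 0 < n := j0.pos
  set A : Matrix (Fin n) (Fin n) ℝ := d • L with hAdef
  have hAentry : ∀ j k, A j k = d * L j k := fun j k => rfl
  have hAoff : ∀ j k, j ≠ k → 0 ≤ A j k := fun j k hjk =>
    mul_nonneg hd.le (hess j k hjk)
  have hAirr : ∀ S : Set (Fin n), S.Nonempty → S ≠ Set.univ → ∃ j ∉ S, ∃ k ∈ S, A j k ≠ 0 := by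
    intro S hS1 hS2
    obtain ⟨j, hj, k, hk, hL⟩ := hirr S hS1 hS2
    exact ⟨j, hj, k, hk, by rw [hAentry]; exact mul_ne_zero hd.ne' hL⟩
  have hAcol : ∀ k, ∑ j, A j k = 0 := by
    intro k
    simp_rw [hAentry, ← Finset.mul_sum, hcol k, mul_zero]
  have hAα : A.mulVec α = 0 := by
    rw [hAdef, Matrix.smul_mulVec, hαeig, smul_zero]
  obtain ⟨K, lam, hK, hlam, hdecay⟩ := key_decay A hn hAoff hAirr hAcol
  set S : ℝ → ℝ := fun t => ∑ j, ψ t j with hSdef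
  set g : ℝ → Fin n → ℝ := fun t j => ψ t j - α j * S t with hgdef
  set h : ℝ → Fin n → ℝ := fun t j => f t j - α j * ∑ k, f t k with hhdef
  set C₂ : ℝ := 2 * n * C with hC₂def
  have hC₂ : 0 < C₂ := by positivity
  set ν : ℝ := min lam μ with hνdef
  have hν : 0 < ν := lt_min hlam hμ
  have hgsum : ∀ t, ∑ j, g t j = 0 := by
    intro t
    rw [hgdef]
    rw [Finset.sum_sub_distrib]
    simp_rw [← Finset.sum_mul]
    rw [hαsum, one_mul, hSdef]
    simp
  have hhsum : ∀ t, ∑ j, h t j = 0 := by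
    intro t
    rw [hhdef]
    rw [Finset.sum_sub_distrib]
    simp_rw [← Finset.sum_mul]
    rw [hαsum, one_mul]
    simp
  have hhbound : ∀ t, 0 ≤ t → n1 (h t) ≤ C₂ * Real.exp (-μ * t) := by
    intro t ht
    have hb : ∀ j, |h t j| ≤ C * Real.exp (-μ * t) + α j * (n * (C * Real.exp (-μ * t))) := by
      intro j
      show |f t j - α j * ∑ k, f t k| ≤ _
      refine le_trans (abs_sub (f t j) (α j * ∑ k, f t k)) ?_
      gcongr
      · exact hf j t ht
      · rw [abs_mul, abs_of_nonneg (hαpos j).le]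
        refine mul_le_mul_of_nonneg_left ?_ (hαpos j).le
        refine le_trans (Finset.abs_sum_le_sum_abs (fun k => f t k) Finset.univ) ?_
        calc ∑ k, |f t k| ≤ ∑ _k : Fin n, C * Real.exp (-μ * t) :=
              Finset.sum_le_sum fun k _ => hf k t ht
        _ = n * (C * Real.exp (-μ * t)) := by
              rw [Finset.sum_const, Finset.card_univ, Fintype.card_fin, nsmul_eq_mul]
    calc n1 (h t) ≤ ∑ j, (C * Real.exp (-μ * t) + α j * (n * (C * Real.exp (-μ * t)))) :=
          Finset.sum_le_sum fun j _ => hb j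
    _ = C₂ * Real.exp (-μ * t) := by
        rw [Finset.sum_add_distrib, Finset.sum_const, Finset.card_univ, Fintype.card_fin,
          nsmul_eq_mul]
        simp_rw [← Finset.sum_mul]
        rw [hαsum, hC₂def]
        ring
  -- derivative facts
  have hψder : ∀ j, ∀ t ∈ Set.Ici (0:ℝ), HasDerivWithinAt (fun s => ψ s j)
      (A.mulVec (ψ t) j + f t j) (Set.Ici 0) t := by
    intro j t ht
    have : A.mulVec (ψ t) j = d * ∑ k, L j k * ψ t k := by
      simp_rw [Matrix.mulVec, dotProduct, hAentry, Finset.mul_sum, mul_assoc]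
    rw [this]
    exact hode j t ht
  have hSsum0 : ∀ x : Fin n → ℝ, ∑ j, A.mulVec x j = 0 := by
    intro x
    rw [sum_mulVec]
    simp_rw [hAcol]
    simp
  have hSder : ∀ t ∈ Set.Ici (0:ℝ), HasDerivWithinAt S (∑ k, f t k) (Set.Ici 0) t := by
    intro t ht
    have h1 := HasDerivWithinAt.fun_sum (fun j (_ : j ∈ Finset.univ) => hψder j t ht)
    have h2 : ∑ j, (A.mulVec (ψ t) j + f t j) = ∑ k, f t k := by
      rw [Finset.sum_add_distrib, hSsum0, zero_add]
    rw [h2] at h1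
    exact h1
  have hAg : ∀ t, A.mulVec (g t) = A.mulVec (ψ t) := by
    intro t
    funext k
    rw [hgdef]
    simp only [Matrix.mulVec, dotProduct]
    have : ∀ i, A k i * (ψ t i - α i * S t) = A k i * ψ t i - (A k i * α i) * S t :=
      fun i => by ring
    simp_rw [this]
    rw [Finset.sum_sub_distrib, ← Finset.sum_mul]
    have h0 : ∑ i, A k i * α i = 0 := by
      have := congrFun hAα k
      simpa [Matrix.mulVec, dotProduct] using this
    rw [h0, zero_mul, sub_zero]
  have hgder : ∀ k, ∀ t ∈ Set.Ici (0:ℝ), HasDerivWithinAt (fun s => g s k)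
      (A.mulVec (g t) k + h t k) (Set.Ici 0) t := by
    intro k t ht
    have h1 := (hψder k t ht).sub ((hSder t ht).const_mul (α k))
    have h2 : A.mulVec (ψ t) k + f t k - α k * ∑ k', f t k' =
        A.mulVec (g t) k + h t k := by
      rw [hAg t, hhdef]
      ring
    rw [← h2]
    exact h1
    -- the main estimate
  have hgbound : ∀ t, 0 ≤ t → ∀ j, |g t j| ≤
      K * Real.exp (-lam * t) * n1 (g 0) + (K * C₂) * Real.exp (-ν * t) * t := by
    intro t ht j
    set w : ℝ → ℝ := fun u => ∑ k, exp ((t - u) • A) j k * g u k with hwdef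
    have hw : ∀ s ∈ Set.Icc (0:ℝ) t, HasDerivWithinAt w
        ((exp ((t - s) • A)).mulVec (h s) j) (Set.Icc 0 t) s := by
      intro s hs
      exact hasDerivWithinAt_expMulVec A t g h s
        (fun k => (hgder k s hs.1).mono Set.Icc_subset_Ici_self) j
    have hbnd : ∀ s ∈ Set.Icc (0:ℝ) t, ‖(exp ((t - s) • A)).mulVec (h s) j‖ ≤
        (K * C₂) * Real.exp (-ν * t) := by
      intro s hs
      rw [Real.norm_eq_abs]
      have h2 := hdecay (t - s) (sub_nonneg.mpr hs.2) (h s) (hhsum s)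
      have h3 := hhbound s hs.1
      calc |(exp ((t - s) • A)).mulVec (h s) j|
          ≤ n1 ((exp ((t - s) • A)).mulVec (h s)) := abs_le_n1 _ j
        _ ≤ K * Real.exp (-lam * (t - s)) * n1 (h s) := h2
        _ ≤ K * Real.exp (-lam * (t - s)) * (C₂ * Real.exp (-μ * s)) :=
            mul_le_mul_of_nonneg_left h3 (by positivity)
        _ = (K * C₂) * (Real.exp (-lam * (t - s)) * Real.exp (-μ * s)) := by ring
        _ ≤ (K * C₂) * Real.exp (-ν * t) := by
            refine mul_le_mul_of_nonneg_left ?_ (by positivity)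
            rw [← Real.exp_add]
            refine Real.exp_le_exp.mpr ?_
            have hν1 : ν ≤ lam := min_le_left _ _
            have hν2 : ν ≤ μ := min_le_right _ _
            nlinarith [hs.1, hs.2, sub_nonneg.mpr hs.2]
    have hmvt := Convex.norm_image_sub_le_of_norm_hasDerivWithin_le hw hbnd
      (convex_Icc 0 t) (Set.left_mem_Icc.mpr ht) (Set.right_mem_Icc.mpr ht)
    have hwt : w t = g t j := by
      rw [hwdef]
      simp only [sub_self, zero_smul, exp_zero]
      simp [Matrix.one_apply]
    have hw0 : w 0 = (exp (t • A)).mulVec (g 0) j := by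
      rw [hwdef]; simp only [sub_zero]; rfl
    have h5 : |w 0| ≤ K * Real.exp (-lam * t) * n1 (g 0) := by
      rw [hw0]
      exact (abs_le_n1 _ j).trans (hdecay t ht (g 0) (hgsum 0))
    have h6 : ‖w t - w 0‖ ≤ (K * C₂) * Real.exp (-ν * t) * ‖t - 0‖ := hmvt
    rw [Real.norm_eq_abs, Real.norm_eq_abs, sub_zero, abs_of_nonneg ht, hwt] at h6
    calc |g t j| = |(g t j - w 0) + w 0| := by congr 1; ring
      _ ≤ |g t j - w 0| + |w 0| := abs_add_le _ _
      _ ≤ (K * C₂) * Real.exp (-ν * t) * t + (K * Real.exp (-lam * t) * n1 (g 0)) :=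
          add_le_add h6 h5
      _ = _ := by ring
  -- limits
  have hbound0 : Filter.Tendsto
      (fun t => K * Real.exp (-lam * t) * n1 (g 0) + (K * C₂) * Real.exp (-ν * t) * t)
      Filter.atTop (nhds 0) := by
    have t1 : Filter.Tendsto (fun t : ℝ => Real.exp (-lam * t)) Filter.atTop (nhds 0) := by
      have := Real.tendsto_exp_neg_atTop_nhds_zero.comp
        (Filter.Tendsto.const_mul_atTop hlam Filter.tendsto_id)
      refine this.congr fun t => ?_
      simp [Function.comp, neg_mul]
    have t2 : Filter.Tendsto (fun t : ℝ => Real.exp (-ν * t) * t) Filter.atTop (nhds 0) := by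
      have base := Real.tendsto_pow_mul_exp_neg_atTop_nhds_zero 1
      have comp := base.comp (Filter.Tendsto.const_mul_atTop hν Filter.tendsto_id)
      have h7 := comp.const_mul ν⁻¹
      rw [mul_zero] at h7
      refine h7.congr fun t => ?_
      simp only [Function.comp, pow_one, id]
      rw [neg_mul]
      field_simp
    have h8 := ((t1.const_mul K).mul_const (n1 (g 0))).add (t2.const_mul (K * C₂))
    have h9 : (K * 0 * n1 (g 0) + (K * C₂) * 0 : ℝ) = 0 := by ring
    rw [h9] at h8
    refine h8.congr fun t => ?_
    ring
  have hg0 : Filter.Tendsto (fun t => g t j0) Filter.atTop (nhds 0) := by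
    apply squeeze_zero_norm' ?_ hbound0
    filter_upwards [Filter.eventually_ge_atTop (0:ℝ)] with t ht
    rw [Real.norm_eq_abs]
    exact hgbound t ht j0
  have hαS : Filter.Tendsto (fun t => α j0 * S t) Filter.atTop (nhds (α j0 * N)) :=
    hsum.const_mul (α j0)
  have hfinal := hg0.add hαS
  rw [zero_add] at hfinal
  refine hfinal.congr fun t => ?_
  show g t j0 + α j0 * S t = ψ t j0
  rw [hgdef]
  ring

end AuxStmt7

theorem stmt_7 {n : ℕ} (L : Matrix (Fin n) (Fin n) ℝ)
    (hess : EssNonneg L) (hirr : Irred L) (hcol : ∀ k, ∑ j, L j k = 0)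
    (α : Fin n → ℝ) (hαpos : ∀ j, 0 < α j) (hαsum : ∑ j, α j = 1)
    (hαeig : L.mulVec α = 0)
    (d : ℝ) (hd : 0 < d)
    (ψ f : ℝ → Fin n → ℝ) (C μ N : ℝ) (hC : 0 < C) (hμ : 0 < μ)
    (hode : ∀ j, ∀ t ∈ Set.Ici (0 : ℝ),
      HasDerivWithinAt (fun s => ψ s j)
        (d * ∑ k, L j k * ψ t k + f t j) (Set.Ici (0 : ℝ)) t)
    (hf : ∀ j, ∀ t ∈ Set.Ici (0 : ℝ), |f t j| ≤ C * Real.exp (-μ * t))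
    (hsum : Filter.Tendsto (fun t => ∑ j, ψ t j) Filter.atTop (nhds N)) :
    ∀ j, Filter.Tendsto (fun t => ψ t j) Filter.atTop (nhds (α j * N)) := by
  exact stmt_7' L hess hirr hcol α hαpos hαsum hαeig d hd ψ f C μ N hC hμ hode hf hsum
end

section
/- Let L be an essentially nonnegative irreducible n×n matrix and let γ₁,...,γₙ be nonnegative constants, not all zero. Consider the matrix B = dL - diag(γ₁,...,γₙ) where d > 0 and L additionally has zero column sums. Then the spectral bound s(B) < 0. -/
open Matrix BigOperators

/-- Any root of the characteristic polynomial admits a (left) eigenvector. -/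
theorem eig_vec {n : ℕ} (M : Matrix (Fin n) (Fin n) ℂ) (μ : ℂ)
    (h : (Matrix.charpoly M).IsRoot μ) :
    ∃ w : Fin n → ℂ, w ≠ 0 ∧ ∀ k, ∑ j, M j k * w j = μ * w k := by
  have hdet : ((Matrix.diagonal fun _ => μ) - M).det = 0 := by
    have := h
    rw [Polynomial.IsRoot, Matrix.charpoly, ← Polynomial.coe_evalRingHom,
      RingHom.map_det] at this
    convert this using 2
    ext i j
    by_cases hij : i = j <;> simp [charmatrix_apply, Matrix.diagonal_apply, hij]
  rw [← Matrix.det_transpose] at hdet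
  obtain ⟨w, hw0, hw⟩ := (Matrix.exists_mulVec_eq_zero_iff).2 hdet
  refine ⟨w, hw0, fun k => ?_⟩
  have := congrFun hw k
  simp [Matrix.mulVec, dotProduct, Matrix.transpose_apply, Matrix.sub_apply,
    Matrix.diagonal_apply] at this
  have e1 : ∑ x, ((if x = k then μ else 0) - M x k) * w x
      = μ * w k - ∑ j, M j k * w j := by
    simp only [sub_mul]
    rw [Finset.sum_sub_distrib]
    congr 1
    · rw [Finset.sum_eq_single k] <;> simp +contextual [mul_comm]
  rw [e1, sub_eq_zero] at this
  exact this.symm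

theorem eig_re_neg {n : ℕ} (L : Matrix (Fin n) (Fin n) ℝ)
    (hess : EssNonneg L) (hirr : Irred L) (hcol : ∀ k, ∑ j, L j k = 0)
    (γ : Fin n → ℝ) (hγ : ∀ j, 0 ≤ γ j) (hγne : γ ≠ 0)
    (d : ℝ) (hd : 0 < d) (μ : ℂ)
    (hμ : IsEig (d • L - Matrix.diagonal γ) μ) : μ.re < 0 := by
  by_contra hre
  push_neg at hre
  set B : Matrix (Fin n) (Fin n) ℝ := d • L - Matrix.diagonal γ with hB
  obtain ⟨w, hw0, hw⟩ := eig_vec (B.map (fun x => (x : ℂ))) μ hμ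
  simp only [Matrix.map_apply] at hw
  obtain ⟨j0, hj0⟩ : ∃ j, w j ≠ 0 := Function.ne_iff.1 hw0
  obtain ⟨k0, -, hk0⟩ := Finset.exists_max_image Finset.univ
    (fun j => ‖w j‖) ⟨j0, Finset.mem_univ _⟩
  set Mx : ℝ := ‖w k0‖ with hMxdef
  have hMx : ∀ j, ‖w j‖ ≤ Mx := fun j => hk0 j (Finset.mem_univ _)
  have hMxpos : 0 < Mx := lt_of_lt_of_le (norm_pos_iff.2 hj0) (hMx j0)
  set S : Set (Fin n) := {k | ‖w k‖ = Mx} with hSdef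
  -- basic facts about B
  have hBoff : ∀ j k : Fin n, j ≠ k → 0 ≤ B j k := by
    intro j k hjk
    have : B j k = d * L j k := by
      simp [hB, Matrix.sub_apply, Matrix.diagonal_apply_ne _ hjk]
    rw [this]
    exact mul_nonneg hd.le (hess j k hjk)
  have hBcol : ∀ k : Fin n, ∑ j, B j k = -γ k := by
    intro k
    have : ∑ j, B j k = d * (∑ j, L j k) - ∑ j, Matrix.diagonal γ j k := by
      simp [hB, Matrix.sub_apply, Finset.sum_sub_distrib, Finset.mul_sum]
    rw [this, hcol k]
    have : ∑ j, Matrix.diagonal γ j k = γ k := by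
      simp [Matrix.diagonal_apply]
    rw [this]; ring
  -- the key local analysis at a maximizing index
  have main : ∀ k ∈ S, γ k = 0 ∧ ∀ j, j ≠ k → L j k ≠ 0 → j ∈ S := by
    intro k hk
    have hkMx : ‖w k‖ = Mx := hk
    set t : ℝ := ∑ j ∈ Finset.univ.erase k, B j k with htdef
    have ht : t = -γ k - B k k := by
      have := Finset.add_sum_erase Finset.univ (fun j => B j k) (Finset.mem_univ k)
      rw [hBcol k] at this
      simp only [htdef]
      linarith [this]
    have h1 : (μ - (B k k : ℂ)) * w k = ∑ j ∈ Finset.univ.erase k, (B j k : ℂ) * w j := by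
      have h0 := hw k
      rw [← Finset.add_sum_erase Finset.univ (fun j => (B j k : ℂ) * w j)
        (Finset.mem_univ k)] at h0
      linear_combination -h0
    have h2 : ‖(μ - (B k k : ℂ)) * w k‖
        ≤ ∑ j ∈ Finset.univ.erase k, B j k * ‖w j‖ := by
      rw [h1]
      refine le_trans (norm_sum_le _ _) (le_of_eq ?_)
      refine Finset.sum_congr rfl fun j hj => ?_
      rw [norm_mul, Complex.norm_real, Real.norm_of_nonneg (hBoff j k (Finset.ne_of_mem_erase hj))]
    have h3 : ∑ j ∈ Finset.univ.erase k, B j k * ‖w j‖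
        ≤ ∑ j ∈ Finset.univ.erase k, B j k * Mx := by
      refine Finset.sum_le_sum fun j hj => ?_
      exact mul_le_mul_of_nonneg_left (hMx j) (hBoff j k (Finset.ne_of_mem_erase hj))
    have hsm : ∑ j ∈ Finset.univ.erase k, B j k * Mx = t * Mx := by
      rw [htdef, Finset.sum_mul]
    have h4 : (μ.re - B k k) * Mx ≤ ‖(μ - (B k k : ℂ)) * w k‖ := by
      rw [norm_mul, hkMx]
      refine mul_le_mul_of_nonneg_right ?_ hMxpos.le
      have : μ.re - B k k = (μ - (B k k : ℂ)).re := by simp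
      rw [this]
      exact Complex.re_le_norm _
    have hchain : (μ.re - B k k) * Mx ≤ t * Mx := by
      calc (μ.re - B k k) * Mx ≤ _ := h4
        _ ≤ _ := h2
        _ ≤ _ := h3
        _ = t * Mx := hsm
    have hle : μ.re - B k k ≤ t := le_of_mul_le_mul_right hchain hMxpos
    have hγk : γ k = 0 := by
      have := hγ k
      rw [ht] at hle
      linarith
    have hre0 : μ.re = 0 := by
      rw [ht] at hle
      have := hγ k
      linarith
    refine ⟨hγk, ?_⟩
    -- equality throughout, hence all maximal entries propagate
    have heq : ∑ j ∈ Finset.univ.erase k, B j k * ‖w j‖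
        = ∑ j ∈ Finset.univ.erase k, B j k * Mx := by
      refine le_antisymm h3 ?_
      have hteq : (μ.re - B k k) * Mx = t * Mx := by
        rw [ht, hre0, hγk]; ring
      rw [hsm, ← hteq]
      exact le_trans h4 h2
    have hterm : ∀ j ∈ Finset.univ.erase k,
        B j k * ‖w j‖ = B j k * Mx := by
      refine (Finset.sum_eq_sum_iff_of_le fun j hj => ?_).1 heq
      exact mul_le_mul_of_nonneg_left (hMx j) (hBoff j k (Finset.ne_of_mem_erase hj))
    intro j hjk hLjk
    have hBjk : 0 < B j k := by
      have : B j k = d * L j k := by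
        simp [hB, Matrix.sub_apply, Matrix.diagonal_apply_ne _ hjk]
      rw [this]
      exact mul_pos hd (lt_of_le_of_ne (hess j k hjk) (Ne.symm hLjk))
    have := hterm j (Finset.mem_erase.2 ⟨hjk, Finset.mem_univ j⟩)
    exact mul_left_cancel₀ hBjk.ne' this
  -- irreducibility forces S = univ
  have hS : S = Set.univ := by
    by_contra hne
    obtain ⟨j, hjS, k, hkS, hLjk⟩ := hirr S ⟨k0, rfl⟩ hne
    have hjk : j ≠ k := fun h => hjS (h ▸ hkS)
    exact hjS ((main k hkS).2 j hjk hLjk)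
  refine hγne (funext fun k => ?_)
  exact (main k (hS ▸ Set.mem_univ k)).1

theorem stmt_8 {n : ℕ} (L : Matrix (Fin n) (Fin n) ℝ)
    (hess : EssNonneg L) (hirr : Irred L) (hcol : ∀ k, ∑ j, L j k = 0)
    (γ : Fin n → ℝ) (hγ : ∀ j, 0 ≤ γ j) (hγne : γ ≠ 0)
    (d : ℝ) (hd : 0 < d) :
    specBound (d • L - Matrix.diagonal γ) < 0 := by
  rcases Nat.eq_zero_or_pos n with hn | hn
  · subst hn
    exact absurd (funext fun i => i.elim0) hγne
  set B : Matrix (Fin n) (Fin n) ℝ := d • L - Matrix.diagonal γ with hB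
  set M : Matrix (Fin n) (Fin n) ℂ := B.map (fun x => (x : ℂ)) with hM
  have hp0 : Matrix.charpoly M ≠ 0 := (Matrix.charpoly_monic M).ne_zero
  have hdeg : 0 < (Matrix.charpoly M).degree := by
    rw [Polynomial.degree_eq_natDegree hp0, Matrix.charpoly_natDegree_eq_dim]
    simp only [Fintype.card_fin]
    exact_mod_cast hn
  obtain ⟨μ0, hμ0⟩ := Complex.exists_root hdeg
  set T : Set ℝ := {x : ℝ | ∃ μ : ℂ, IsEig B μ ∧ μ.re = x} with hT
  have hTim : T = Complex.re '' {μ : ℂ | (Matrix.charpoly M).IsRoot μ} := by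
    ext x
    simp [hT, IsEig, Set.mem_image, hM, hB, eq_comm]
  have hfin : T.Finite := by
    rw [hTim]
    exact (Polynomial.finite_setOf_isRoot hp0).image _
  have hne : T.Nonempty := ⟨μ0.re, μ0, hμ0, rfl⟩
  have hmem := hne.csSup_mem hfin
  obtain ⟨μ, hμ, hμre⟩ := hmem
  rw [specBound, ← hT, ← hμre]
  exact eig_re_neg L hess hirr hcol γ hγ hγne d hd μ hμ
end

section
/- Let B be an essentially nonnegative irreducible n×n matrix with s(B) < 0, and let C = diag(β₁,...,βₙ) with each βⱼ > 0. Then R₀ := r(-B⁻¹C) is positive and 1/R₀ is an eigenvalue of the generalized eigenvalue problem B φ = -λ C φ admitting a positive eigenvector φ, and it is the unique eigenvalue of this problem with a positive eigenvector. -/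
open Matrix BigOperators

open Polynomial Filter Topology

namespace PF

attribute [local instance] Matrix.linftyOpNormedRing Matrix.linftyOpNormedAlgebra

variable {n : ℕ}

theorem my_spec {n : ℕ} (M : Matrix (Fin n) (Fin n) ℂ) (μ : ℂ) :
    μ ∈ spectrum ℂ M ↔ M.charpoly.IsRoot μ := by
  rw [spectrum.mem_iff, Matrix.isUnit_iff_isUnit_det, isUnit_iff_ne_zero, not_ne_iff]
  have h1 : algebraMap ℂ (Matrix (Fin n) (Fin n) ℂ) μ = Matrix.scalar (Fin n) μ := rfl
  have h2 : M.charpoly.eval μ = ((Matrix.scalar (Fin n) μ) - M).det := by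
    rw [Matrix.charpoly, eval_det, Matrix.matPolyEquiv_charmatrix]; simp
  rw [h1]
  constructor <;> intro h <;> simp [IsRoot, h2, h] at * <;> assumption

theorem my_root_iff {n : ℕ} (M : Matrix (Fin n) (Fin n) ℂ) (μ : ℂ) :
    M.charpoly.IsRoot μ ↔ ∃ v, v ≠ 0 ∧ M.mulVec v = μ • v := by
  have h2 : M.charpoly.eval μ = ((Matrix.scalar (Fin n) μ) - M).det := by
    rw [Matrix.charpoly, eval_det, Matrix.matPolyEquiv_charmatrix]; simp
  rw [IsRoot, h2, ← Matrix.exists_mulVec_eq_zero_iff]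
  apply exists_congr; intro v
  constructor
  · rintro ⟨hv, h⟩
    refine ⟨hv, ?_⟩
    rw [Matrix.sub_mulVec] at h
    have : (Matrix.scalar (Fin n) μ).mulVec v = μ • v := by
      ext i; simp [Matrix.scalar, Matrix.mulVec_diagonal]
    rw [this] at h
    exact (sub_eq_zero.mp h).symm
  · rintro ⟨hv, h⟩
    refine ⟨hv, ?_⟩
    rw [Matrix.sub_mulVec]
    have : (Matrix.scalar (Fin n) μ).mulVec v = μ • v := by
      ext i; simp [Matrix.scalar, Matrix.mulVec_diagonal]
    rw [this, h, sub_self]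

noncomputable def cm (L : Matrix (Fin n) (Fin n) ℝ) : Matrix (Fin n) (Fin n) ℂ :=
  L.map (fun x => (x : ℂ))

theorem isEig_iff (L : Matrix (Fin n) (Fin n) ℝ) (μ : ℂ) :
    IsEig L μ ↔ ∃ v, v ≠ 0 ∧ (cm L).mulVec v = μ • v := my_root_iff _ _

theorem isEig_of_real (L : Matrix (Fin n) (Fin n) ℝ) (c : ℝ) (x : Fin n → ℝ) (hx : x ≠ 0)
    (h : L.mulVec x = c • x) : IsEig L (c : ℂ) := by
  rw [isEig_iff]
  refine ⟨fun i => (x i : ℂ), ?_, ?_⟩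
  · intro h0
    apply hx; ext i
    have := congrFun h0 i
    have : (x i : ℂ) = 0 := this
    exact_mod_cast this
  · ext i
    have := congrFun h i
    simp only [Matrix.mulVec, dotProduct, Pi.smul_apply, smul_eq_mul] at this ⊢
    simp only [cm, Matrix.map_apply]
    rw [← Complex.ofReal_mul, ← this]
    push_cast
    rfl

theorem eig_finite (L : Matrix (Fin n) (Fin n) ℝ) : {μ : ℂ | IsEig L μ}.Finite :=
  Polynomial.finite_setOf_isRoot (Matrix.charpoly_monic _).ne_zero

theorem eig_nonempty (L : Matrix (Fin n) (Fin n) ℝ) (hn : 0 < n) : ∃ μ, IsEig L μ := by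
  apply Complex.exists_root
  rw [Matrix.charpoly_degree_eq_dim, Fintype.card_fin]
  exact_mod_cast hn

theorem radSet_finite (L : Matrix (Fin n) (Fin n) ℝ) :
    {x : ℝ | ∃ μ : ℂ, IsEig L μ ∧ ‖μ‖ = x}.Finite := by
  have : {x : ℝ | ∃ μ : ℂ, IsEig L μ ∧ ‖μ‖ = x} =
      (fun μ : ℂ => ‖μ‖) '' {μ | IsEig L μ} := by
    ext x
    simp only [Set.mem_image, Set.mem_setOf_eq]
  rw [this]; exact (eig_finite L).image _

theorem boundSet_finite (L : Matrix (Fin n) (Fin n) ℝ) :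
    {x : ℝ | ∃ μ : ℂ, IsEig L μ ∧ μ.re = x}.Finite := by
  have : {x : ℝ | ∃ μ : ℂ, IsEig L μ ∧ μ.re = x} =
      Complex.re '' {μ | IsEig L μ} := by
    ext x
    simp only [Set.mem_image, Set.mem_setOf_eq]
  rw [this]; exact (eig_finite L).image _

theorem abs_le_specRadius {L : Matrix (Fin n) (Fin n) ℝ} {μ : ℂ} (h : IsEig L μ) :
    ‖μ‖ ≤ specRadius L :=
  le_csSup (radSet_finite L).bddAbove ⟨μ, h, rfl⟩

theorem re_le_specBound {L : Matrix (Fin n) (Fin n) ℝ} {μ : ℂ} (h : IsEig L μ) :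
    μ.re ≤ specBound L :=
  le_csSup (boundSet_finite L).bddAbove ⟨μ, h, rfl⟩

theorem specRadius_mem (L : Matrix (Fin n) (Fin n) ℝ) (hn : 0 < n) :
    ∃ μ, IsEig L μ ∧ ‖μ‖ = specRadius L := by
  have hne : {x : ℝ | ∃ μ : ℂ, IsEig L μ ∧ ‖μ‖ = x}.Nonempty := by
    obtain ⟨μ, hμ⟩ := eig_nonempty L hn; exact ⟨_, μ, hμ, rfl⟩
  exact hne.csSup_mem (radSet_finite L)

theorem specRadius_nonneg (L : Matrix (Fin n) (Fin n) ℝ) (hn : 0 < n) :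
    0 ≤ specRadius L := by
  obtain ⟨μ, _, h⟩ := specRadius_mem L hn
  rw [← h]; positivity

theorem cm_pow (L : Matrix (Fin n) (Fin n) ℝ) (k : ℕ) : cm (L ^ k) = (cm L) ^ k := by
  have : cm (L ^ k) = (Complex.ofRealHom.mapMatrix : Matrix (Fin n) (Fin n) ℝ →+* _) (L ^ k) := rfl
  rw [this, map_pow]; rfl

theorem cm_nnnorm (M : Matrix (Fin n) (Fin n) ℝ) : ‖cm M‖₊ = ‖M‖₊ := by
  rw [Matrix.linfty_opNNNorm_def, Matrix.linfty_opNNNorm_def]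
  congr 1; ext i; congr 1; ext j
  simp [cm, Complex.nnnorm_real]

theorem cm_norm (M : Matrix (Fin n) (Fin n) ℝ) : ‖cm M‖ = ‖M‖ :=
  congrArg NNReal.toReal (cm_nnnorm M)

theorem gelfand_bound (L : Matrix (Fin n) (Fin n) ℝ) (hn : 0 < n) (c : ℝ)
    (hc : specRadius L < c) : ∀ᶠ k in atTop, ‖L ^ k‖ ≤ c ^ k := by
  have hc0 : 0 < c := lt_of_le_of_lt (specRadius_nonneg L hn) hc
  have hsr : spectralRadius ℂ (cm L) ≤ ENNReal.ofReal (specRadius L) := by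
    rw [spectralRadius]
    refine iSup₂_le fun μ hμ => ?_
    have : IsEig L μ := (my_spec _ _).mp hμ
    have h1 : ‖μ‖ ≤ specRadius L := abs_le_specRadius this
    rw [← ENNReal.ofReal_coe_nnreal, coe_nnnorm]
    exact ENNReal.ofReal_le_ofReal h1
  have hlt : spectralRadius ℂ (cm L) < ENNReal.ofReal c :=
    lt_of_le_of_lt hsr (by exact_mod_cast ENNReal.ofReal_lt_ofReal_iff hc0 |>.mpr hc)
  have htend := spectrum.pow_norm_pow_one_div_tendsto_nhds_spectralRadius (cm L)
  have hev : ∀ᶠ k : ℕ in atTop,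
      ENNReal.ofReal (‖(cm L) ^ k‖ ^ (1 / (k : ℝ))) < ENNReal.ofReal c :=
    htend.eventually_lt_const hlt
  filter_upwards [hev, eventually_ge_atTop 1] with k hk hk1
  have h2 : ‖(cm L) ^ k‖ ^ (1 / (k : ℝ)) < c := by
    have := (ENNReal.ofReal_lt_ofReal_iff hc0).mp hk
    exact this
  have hnn : (0:ℝ) ≤ ‖(cm L) ^ k‖ := norm_nonneg _
  have h3 : ‖(cm L) ^ k‖ ≤ c ^ k := by
    have hkne : (k : ℝ) ≠ 0 := by positivity
    calc ‖(cm L) ^ k‖ = (‖(cm L) ^ k‖ ^ (1 / (k:ℝ))) ^ (k:ℕ) := by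
          rw [← Real.rpow_natCast (_ ^ (1/(k:ℝ))) k, ← Real.rpow_mul hnn, one_div,
            inv_mul_cancel₀ hkne, Real.rpow_one]
      _ ≤ c ^ k := by
          apply pow_le_pow_left₀ (by positivity) h2.le
  rw [← cm_pow] at h3
  rwa [cm_norm] at h3

theorem mulVec_mono {A : Matrix (Fin n) (Fin n) ℝ} (hA : ∀ i j, 0 ≤ A i j)
    {u w : Fin n → ℝ} (h : ∀ i, u i ≤ w i) : ∀ i, (A *ᵥ u) i ≤ (A *ᵥ w) i := by
  intro i
  simp only [Matrix.mulVec, dotProduct]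
  exact Finset.sum_le_sum fun j _ => mul_le_mul_of_nonneg_left (h j) (hA i j)

theorem mulVec_pos {A : Matrix (Fin n) (Fin n) ℝ} (hA : ∀ i j, 0 < A i j)
    {u : Fin n → ℝ} (hu : ∀ i, 0 ≤ u i) (hu0 : u ≠ 0) : ∀ i, 0 < (A *ᵥ u) i := by
  obtain ⟨j0, hj0⟩ := Function.ne_iff.mp hu0
  have hj0' : 0 < u j0 := (hu j0).lt_of_ne (by simpa using Ne.symm hj0)
  intro i
  simp only [Matrix.mulVec, dotProduct]
  apply Finset.sum_pos'
  · intro j _; exact mul_nonneg (hA i j).le (hu j)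
  · exact ⟨j0, Finset.mem_univ _, mul_pos (hA i j0) hj0'⟩

theorem perron (A : Matrix (Fin n) (Fin n) ℝ) (hA : ∀ i j, 0 < A i j) (hn : 0 < n) :
    0 < specRadius A ∧ ∃ x : Fin n → ℝ, (∀ i, 0 < x i) ∧ A *ᵥ x = specRadius A • x := by
  obtain ⟨μ, hμ, habs⟩ := specRadius_mem A hn
  obtain ⟨v, hv, hveq⟩ := (isEig_iff A μ).mp hμ
  set ρ := specRadius A with hρdef
  set x : Fin n → ℝ := fun i => ‖v i‖ with hxdef
  have hx0 : ∀ i, 0 ≤ x i := fun i => norm_nonneg _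
  have hxne : x ≠ 0 := by
    obtain ⟨i, hi⟩ := Function.ne_iff.mp hv
    intro h0
    have h1 : x i = 0 := congrFun h0 i
    rw [hxdef] at h1
    simp only [norm_eq_zero] at h1
    exact hi (by simpa using h1)
  have key1 : ∀ i, ρ * x i ≤ (A *ᵥ x) i := by
    intro i
    have h1 : (μ * v i) = ((cm A) *ᵥ v) i := by rw [hveq]; simp
    have h2 : ‖μ * v i‖ ≤ ∑ j, A i j * x j := by
      rw [h1]
      refine le_trans (norm_sum_le Finset.univ (fun j => cm A i j * v j)) ?_
      apply Finset.sum_le_sum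
      intro j _
      rw [hxdef]
      simp only [cm, Matrix.map_apply]
      rw [norm_mul, Complex.norm_real, Real.norm_eq_abs, abs_of_pos (hA i j)]
    calc ρ * x i = ‖μ‖ * ‖v i‖ := by rw [habs]
      _ = ‖μ * v i‖ := (norm_mul _ _).symm
      _ ≤ ∑ j, A i j * x j := h2
      _ = (A *ᵥ x) i := rfl
  by_cases hAx : A *ᵥ x = ρ • x
  · have hy : ∀ i, 0 < (A *ᵥ x) i := mulVec_pos hA hx0 hxne
    have hkey : ∀ i, 0 < ρ * x i := by
      intro i
      have := hy i
      rw [hAx] at this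
      simpa using this
    obtain ⟨i⟩ : Nonempty (Fin n) := ⟨⟨0, hn⟩⟩
    have hρpos : 0 < ρ := by
      by_contra hle
      push_neg at hle
      have := mul_nonpos_of_nonpos_of_nonneg hle (hx0 i)
      linarith [hkey i]
    refine ⟨hρpos, x, fun i => ?_, hAx⟩
    nlinarith [hkey i, hx0 i]
  · exfalso
    set y := A *ᵥ x with hydef
    have hy : ∀ i, 0 < y i := mulVec_pos hA hx0 hxne
    set z : Fin n → ℝ := y - ρ • x with hzdef
    have hz0 : ∀ i, 0 ≤ z i := by
      intro i; simp only [hzdef, Pi.sub_apply, Pi.smul_apply, smul_eq_mul]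
      linarith [key1 i]
    have hzne : z ≠ 0 := sub_ne_zero.mpr hAx
    have hAz : ∀ i, 0 < (A *ᵥ z) i := mulVec_pos hA hz0 hzne
    have hAzeq : A *ᵥ z = A *ᵥ y - ρ • y := by
      rw [hzdef, Matrix.mulVec_sub, Matrix.mulVec_smul]
    have hstrict : ∀ i, ρ * y i < (A *ᵥ y) i := by
      intro i
      have := hAz i
      rw [hAzeq] at this
      simp only [Pi.sub_apply, Pi.smul_apply, smul_eq_mul] at this
      linarith
    have hne : (Finset.univ : Finset (Fin n)).Nonempty := ⟨⟨0, hn⟩, Finset.mem_univ _⟩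
    set c := Finset.univ.inf' hne (fun i => (A *ᵥ y) i / y i) with hcdef
    have hρc : ρ < c := by
      rw [hcdef, Finset.lt_inf'_iff]
      intro i _
      rw [lt_div_iff₀ (hy i)]
      exact hstrict i
    have hcy : ∀ i, c * y i ≤ (A *ᵥ y) i := by
      intro i
      have h1 : c ≤ (A *ᵥ y) i / y i := Finset.inf'_le _ (Finset.mem_univ i)
      rw [le_div_iff₀ (hy i)] at h1
      linarith
    have hρ0 : 0 ≤ ρ := specRadius_nonneg A hn
    have hc0 : 0 < c := lt_of_le_of_lt hρ0 hρc
    have hind : ∀ k : ℕ, ∀ i, c ^ k * y i ≤ ((A ^ k) *ᵥ y) i := by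
      intro k
      induction k with
      | zero => intro i; simp [Matrix.one_mulVec]
      | succ k ih =>
        intro i
        have h1 : (A ^ (k+1)) *ᵥ y = A *ᵥ ((A ^ k) *ᵥ y) := by
          rw [pow_succ']; exact (Matrix.mulVec_mulVec y A (A^k)).symm
        rw [h1]
        have h2 : ∀ j, ((c ^ k) • y) j ≤ ((A ^ k) *ᵥ y) j := by
          intro j
          simpa using ih j
        have h3 := mulVec_mono (fun i j => (hA i j).le) h2 i
        rw [Matrix.mulVec_smul] at h3
        simp only [Pi.smul_apply, smul_eq_mul] at h3
        calc c ^ (k+1) * y i = c ^ k * (c * y i) := by ring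
          _ ≤ c ^ k * (A *ᵥ y) i := by
              apply mul_le_mul_of_nonneg_left (hcy i) (by positivity)
          _ ≤ _ := h3
    -- now the norm contradiction
    set c' := (ρ + c) / 2 with hc'def
    have hρc' : ρ < c' := by rw [hc'def]; linarith
    have hc'c : c' < c := by rw [hc'def]; linarith
    have hc'0 : 0 ≤ c' := by positivity
    have hev := gelfand_bound A hn c' hρc'
    have hyne : y ≠ 0 := by
      intro h0
      obtain ⟨i⟩ : Nonempty (Fin n) := ⟨⟨0, hn⟩⟩
      have := hy i
      rw [h0] at this
      simp at this
    have hynorm : 0 < ‖y‖ := norm_pos_iff.mpr hyne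
    -- max coordinate of y
    obtain ⟨i0, -, hi0⟩ := Finset.exists_max_image (Finset.univ : Finset (Fin n)) y hne
    have hymax : ‖y‖ = y i0 := by
      apply le_antisymm
      · apply pi_norm_le_iff_of_nonneg (hy i0).le |>.mpr
        intro j
        rw [Real.norm_eq_abs, abs_of_pos (hy j)]
        exact hi0 j (Finset.mem_univ j)
      · calc y i0 ≤ |y i0| := le_abs_self _
          _ ≤ ‖y‖ := norm_le_pi_norm y i0
    obtain ⟨K, hK1, hK2⟩ := ((hev.and (eventually_ge_atTop 1)).exists)
    have hb1 : c ^ K * ‖y‖ ≤ ‖(A ^ K) *ᵥ y‖ := by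
      calc c ^ K * ‖y‖ = c ^ K * y i0 := by rw [hymax]
        _ ≤ ((A ^ K) *ᵥ y) i0 := hind K i0
        _ ≤ |((A ^ K) *ᵥ y) i0| := le_abs_self _
        _ ≤ ‖(A ^ K) *ᵥ y‖ := by
            have := norm_le_pi_norm ((A ^ K) *ᵥ y) i0
            rwa [Real.norm_eq_abs] at this
    have hb2 : ‖(A ^ K) *ᵥ y‖ ≤ ‖A ^ K‖ * ‖y‖ := Matrix.linfty_opNorm_mulVec _ _
    have hb3 : ‖A ^ K‖ ≤ c' ^ K := hK1
    have hfin : c ^ K ≤ c' ^ K := by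
      have := hb1.trans (hb2.trans (mul_le_mul_of_nonneg_right hb3 (norm_nonneg y)))
      exact le_of_mul_le_mul_right this hynorm
    have : c' ^ K < c ^ K := pow_lt_pow_left₀ hc'c hc'0 (by omega)
    linarith

theorem perron_unique (A : Matrix (Fin n) (Fin n) ℝ) (hA : ∀ i j, 0 < A i j) (hn : 0 < n)
    (μ : ℝ) (φ : Fin n → ℝ) (hφ : ∀ i, 0 < φ i) (h : A *ᵥ φ = μ • φ) :
    μ = specRadius A := by
  obtain ⟨hρ', w, hw, hweq⟩ := perron Aᵀ (fun i j => hA j i) hn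
  have hne : (Finset.univ : Finset (Fin n)).Nonempty := ⟨⟨0, hn⟩, Finset.mem_univ _⟩
  have key : ∀ (ν : ℝ) (ψ : Fin n → ℝ), (∀ i, 0 < ψ i) → A *ᵥ ψ = ν • ψ →
      ν = specRadius Aᵀ := by
    intro ν ψ hψ hνψ
    have hdot : w ⬝ᵥ (A *ᵥ ψ) = (Aᵀ *ᵥ w) ⬝ᵥ ψ := by
      rw [Matrix.dotProduct_mulVec, Matrix.mulVec_transpose]
    rw [hνψ, hweq] at hdot
    have h1 : w ⬝ᵥ (ν • ψ) = ν * (w ⬝ᵥ ψ) := by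
      simp [dotProduct, Finset.mul_sum]
      apply Finset.sum_congr rfl
      intro i _
      ring
    have h2 : (specRadius Aᵀ • w) ⬝ᵥ ψ = specRadius Aᵀ * (w ⬝ᵥ ψ) := by
      simp [dotProduct, Finset.mul_sum]
      apply Finset.sum_congr rfl
      intro i _
      ring
    rw [h1, h2] at hdot
    have hpos : 0 < w ⬝ᵥ ψ := by
      apply Finset.sum_pos
      · intro i _; exact mul_pos (hw i) (hψ i)
      · exact hne
    exact mul_right_cancel₀ (ne_of_gt hpos) hdot
  obtain ⟨hρ, x, hx, hxeq⟩ := perron A hA hn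
  have e1 : specRadius A = specRadius Aᵀ := key _ x hx hxeq
  have e2 : μ = specRadius Aᵀ := key _ φ hφ h
  rw [e2, e1]

theorem charpoly_transpose (M : Matrix (Fin n) (Fin n) ℂ) : Mᵀ.charpoly = M.charpoly := by
  rw [Matrix.charpoly, Matrix.charpoly, ← Matrix.det_transpose (charmatrix M)]
  congr 1
  apply Matrix.ext
  intro i j
  by_cases h : i = j
  · subst h
    rw [Matrix.transpose_apply, Matrix.charmatrix_apply_eq, Matrix.charmatrix_apply_eq,
      Matrix.transpose_apply]
  · rw [Matrix.transpose_apply, Matrix.charmatrix_apply_ne _ _ _ (Ne.symm h),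
      Matrix.charmatrix_apply_ne _ _ _ h, Matrix.transpose_apply]

theorem isEig_transpose (L : Matrix (Fin n) (Fin n) ℝ) (μ : ℂ) :
    IsEig Lᵀ μ ↔ IsEig L μ := by
  unfold IsEig
  have : (Lᵀ).map (fun x => (x : ℂ)) = (L.map (fun x => (x : ℂ)))ᵀ := rfl
  rw [this, charpoly_transpose]

theorem specBound_transpose (L : Matrix (Fin n) (Fin n) ℝ) : specBound Lᵀ = specBound L := by
  unfold specBound
  congr 1
  ext x
  simp only [Set.mem_setOf_eq]
  constructor
  · rintro ⟨μ, h, rfl⟩; exact ⟨μ, (isEig_transpose L μ).mp h, rfl⟩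
  · rintro ⟨μ, h, rfl⟩; exact ⟨μ, (isEig_transpose L μ).mpr h, rfl⟩

theorem irred_transpose {B : Matrix (Fin n) (Fin n) ℝ} (h : Irred B) : Irred Bᵀ := by
  intro S hS hSne
  have h1 : Sᶜ.Nonempty := Set.nonempty_compl.mpr hSne
  have h2 : Sᶜ ≠ Set.univ := by
    intro hc
    apply hS.ne_empty
    rw [← compl_compl S, hc, Set.compl_univ]
  obtain ⟨j, hj, k, hk, hBjk⟩ := h Sᶜ h1 h2
  exact ⟨k, hk, j, Set.notMem_compl_iff.mp hj, hBjk⟩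

theorem essNonneg_transpose {B : Matrix (Fin n) (Fin n) ℝ} (h : EssNonneg B) : EssNonneg Bᵀ :=
  fun j k hjk => h k j (Ne.symm hjk)

theorem pow_entry_nonneg {N : Matrix (Fin n) (Fin n) ℝ} (hN : ∀ i j, 0 ≤ N i j) (k : ℕ) :
    ∀ i j, 0 ≤ (N ^ k) i j := by
  induction k with
  | zero => intro i j; by_cases h : i = j <;> simp [pow_zero, Matrix.one_apply, h]
  | succ k ih =>
    intro i j
    rw [pow_succ, Matrix.mul_apply]
    exact Finset.sum_nonneg fun l _ => mul_nonneg (ih i l) (hN l j)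

theorem pow_entry_pos_step {N : Matrix (Fin n) (Fin n) ℝ} (hN : ∀ i j, 0 ≤ N i j)
    (hdiag : ∀ i, 0 < N i i) {k : ℕ} {i j : Fin n} (h : 0 < (N ^ k) i j) :
    0 < (N ^ (k + 1)) i j := by
  rw [pow_succ]
  have : (N ^ k * N) i j = ∑ l, (N ^ k) i l * N l j := rfl
  rw [this]
  apply Finset.sum_pos'
  · intro l _; exact mul_nonneg (pow_entry_nonneg hN k i l) (hN l j)
  · exact ⟨j, Finset.mem_univ _, mul_pos h (hdiag j)⟩

theorem pow_entry_pos_mono {N : Matrix (Fin n) (Fin n) ℝ} (hN : ∀ i j, 0 ≤ N i j)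
    (hdiag : ∀ i, 0 < N i i) {k K : ℕ} (hkK : k ≤ K) {i j : Fin n} (h : 0 < (N ^ k) i j) :
    0 < (N ^ K) i j := by
  induction K, hkK using Nat.le_induction with
  | base => exact h
  | succ K hkK ih => exact pow_entry_pos_step hN hdiag ih

theorem reach {B : Matrix (Fin n) (Fin n) ℝ} (hess : EssNonneg B) (hirr : Irred B)
    {a : ℝ} (ha : ∀ i, 0 < B i i + a) :
    ∀ i j, ∃ k, 0 < ((B + a • (1 : Matrix (Fin n) (Fin n) ℝ)) ^ k) i j := by
  set N := B + a • (1 : Matrix (Fin n) (Fin n) ℝ) with hNdef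
  have hNa : ∀ i j, N i j = B i j + if i = j then a else 0 := by
    intro i j
    simp [hNdef, Matrix.add_apply, Matrix.smul_apply, Matrix.one_apply]
  have hN0 : ∀ i j, 0 ≤ N i j := by
    intro i j
    rw [hNa]
    by_cases h : i = j
    · subst h; simpa using (ha i).le
    · simpa [h] using hess i j h
  intro i j
  set S : Set (Fin n) := {i | ∃ k, 0 < (N ^ k) i j} with hSdef
  have hjS : j ∈ S := ⟨0, by simp [pow_zero, Matrix.one_apply]⟩
  by_cases hiS : i ∈ S
  · exact hiS
  · exfalso
    have hSne : S ≠ Set.univ := by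
      intro hu
      exact hiS (hu ▸ Set.mem_univ i)
    obtain ⟨p, hp, q, hq, hBpq⟩ := hirr S ⟨j, hjS⟩ hSne
    have hpq : p ≠ q := by rintro rfl; exact hp hq
    have hNpq : 0 < N p q := by
      rw [hNa]
      simp only [hpq, if_false, add_zero]
      exact lt_of_le_of_ne (hess p q hpq) (Ne.symm hBpq)
    obtain ⟨m, hm⟩ := hq
    apply hp
    refine ⟨m + 1, ?_⟩
    have : (N ^ (m+1)) p j = ∑ l, N p l * (N ^ m) l j := by
      rw [pow_succ']; rfl
    rw [this]
    apply Finset.sum_pos'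
    · intro l _; exact mul_nonneg (hN0 p l) (pow_entry_nonneg hN0 m l j)
    · exact ⟨q, Finset.mem_univ _, mul_pos hNpq hm⟩

theorem eig_colinear {G : Matrix (Fin n) (Fin n) ℝ} (hG : ∀ i j, 0 < G i j)
    {ρ : ℝ} (hρ : 0 < ρ) {x : Fin n → ℝ} (hx : ∀ i, 0 < x i) (hxe : G *ᵥ x = ρ • x)
    {u : Fin n → ℝ} (hue : G *ᵥ u = ρ • u) : ∃ t : ℝ, u = t • x := by
  by_cases hu0 : u = 0
  · exact ⟨0, by simp [hu0]⟩
  -- reduce to the case where u has a positive entry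
  have main : ∀ u : Fin n → ℝ, G *ᵥ u = ρ • u → (∃ i, 0 < u i) → ∃ t : ℝ, u = t • x := by
    intro u hue ⟨i1, hi1⟩
    set Pf := Finset.univ.filter (fun i => 0 < u i) with hPf
    have hPne : Pf.Nonempty := ⟨i1, by simp [hPf, hi1]⟩
    set t := Pf.inf' hPne (fun i => x i / u i) with ht
    obtain ⟨i0, hi0mem, hi0⟩ := Finset.exists_mem_eq_inf' hPne (fun i => x i / u i)
    have hui0 : 0 < u i0 := by
      have := Finset.mem_filter.mp hi0mem
      exact this.2
    have htpos : 0 < t := by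
      rw [ht, hi0]
      exact div_pos (hx i0) hui0
    set z : Fin n → ℝ := x - t • u with hz
    have hz0 : ∀ i, 0 ≤ z i := by
      intro i
      simp only [hz, Pi.sub_apply, Pi.smul_apply, smul_eq_mul]
      by_cases hui : 0 < u i
      · have hmem : i ∈ Pf := by simp [hPf, hui]
        have : t ≤ x i / u i := Finset.inf'_le _ hmem
        rw [le_div_iff₀ hui] at this
        linarith
      · push_neg at hui
        have : t * u i ≤ 0 := mul_nonpos_of_nonneg_of_nonpos htpos.le hui
        linarith [hx i]
    have hzi0 : z i0 = 0 := by
      simp only [hz, Pi.sub_apply, Pi.smul_apply, smul_eq_mul]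
      rw [ht, hi0, div_mul_cancel₀ _ (ne_of_gt hui0)]
      ring
    have hze : G *ᵥ z = ρ • z := by
      rw [hz, Matrix.mulVec_sub, Matrix.mulVec_smul, hxe, hue, smul_smul, mul_comm, ← smul_smul,
        ← smul_sub]
    have hzzero : z = 0 := by
      by_contra hzne
      have := mulVec_pos hG hz0 hzne i0
      rw [hze] at this
      simp only [Pi.smul_apply, smul_eq_mul, hzi0, mul_zero] at this
      exact lt_irrefl 0 this
    have hxt : x = t • u := by
      have h0 : x - t • u = 0 := hzzero
      ext i
      have := congrFun h0 i
      simp only [Pi.sub_apply, Pi.zero_apply, Pi.smul_apply, smul_eq_mul] at this ⊢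
      linarith
    exact ⟨t⁻¹, by rw [hxt, smul_smul, inv_mul_cancel₀ (ne_of_gt htpos), one_smul]⟩
  by_cases hpos : ∃ i, 0 < u i
  · exact main u hue hpos
  · have hneg : ∃ i, 0 < (-u) i := by
      push_neg at hpos
      obtain ⟨i, hi⟩ := Function.ne_iff.mp hu0
      refine ⟨i, ?_⟩
      simp only [Pi.neg_apply]
      have : u i ≤ 0 := hpos i
      have hne : u i ≠ 0 := by simpa using hi
      cases lt_or_eq_of_le this with
      | inl h => linarith
      | inr h => exact absurd h hne
    have hnue : G *ᵥ (-u) = ρ • (-u) := by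
      rw [Matrix.mulVec_neg, hue, smul_neg]
    obtain ⟨t, htt⟩ := main (-u) hnue hneg
    exact ⟨-t, by rw [← neg_neg u, htt, neg_smul]⟩

theorem key {B : Matrix (Fin n) (Fin n) ℝ} (hess : EssNonneg B) (hirr : Irred B)
    (hsb : specBound B < 0) {a : ℝ} (ha : ∀ i, 0 < B i i + a) (hn : 0 < n) :
    ∃ c : ℝ, ∃ x : Fin n → ℝ, c < a ∧ (∀ i, 0 < x i) ∧
      (B + a • (1 : Matrix (Fin n) (Fin n) ℝ)) *ᵥ x = c • x := by
  set N := B + a • (1 : Matrix (Fin n) (Fin n) ℝ) with hNdef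
  have hNa : ∀ i j, N i j = B i j + if i = j then a else 0 := by
    intro i j
    simp [hNdef, Matrix.add_apply, Matrix.smul_apply, Matrix.one_apply]
  have hN0 : ∀ i j, 0 ≤ N i j := by
    intro i j
    rw [hNa]
    by_cases h : i = j
    · subst h; simpa using (ha i).le
    · simpa [h] using hess i j h
  have hNdiag : ∀ i, 0 < N i i := by
    intro i; rw [hNa]; simpa using ha i
  -- a uniform power K making N^K strictly positive
  have hreach := reach hess hirr ha
  choose f hf using fun i => hreach i
  set K := Finset.univ.sup (fun i : Fin n => Finset.univ.sup (fun j => f i j)) with hK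
  have hGpos : ∀ i j, 0 < (N ^ K) i j := by
    intro i j
    apply pow_entry_pos_mono hN0 hNdiag _ (hf i j)
    have h1 : f i j ≤ Finset.univ.sup (fun j => f i j) := Finset.le_sup (Finset.mem_univ j)
    have h2 : Finset.univ.sup (fun j => f i j) ≤ K :=
      Finset.le_sup (f := fun i => Finset.univ.sup (fun j => f i j)) (Finset.mem_univ i)
    omega
  set G := N ^ K with hG
  obtain ⟨hρpos, x, hx, hxe⟩ := perron G hGpos hn
  set ρ := specRadius G
  -- N maps the ρ-eigenspace of G to itself
  have hcomm : G * N = N * G := by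
    rw [hG, ← pow_succ, ← pow_succ']
  have hNxeig : G *ᵥ (N *ᵥ x) = ρ • (N *ᵥ x) := by
    rw [Matrix.mulVec_mulVec, hcomm, ← Matrix.mulVec_mulVec, hxe, Matrix.mulVec_smul]
  obtain ⟨c, hc⟩ := eig_colinear hGpos hρpos hx hxe hNxeig
  refine ⟨c, x, ?_, hx, hc⟩
  -- B has real eigenvalue c - a, whence c - a ≤ specBound B < 0
  have hxne : x ≠ 0 := by
    intro h0
    have := hx ⟨0, hn⟩
    rw [h0] at this
    simp at this
  have hBx : B *ᵥ x = (c - a) • x := by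
    have h1 : B = N - a • (1 : Matrix (Fin n) (Fin n) ℝ) := by rw [hNdef, add_sub_cancel_right]
    rw [h1, Matrix.sub_mulVec, hc, Matrix.smul_mulVec, Matrix.one_mulVec, sub_smul]
  have heig := isEig_of_real B (c - a) x hxne hBx
  have := re_le_specBound heig
  simp only [Complex.ofReal_re] at this
  linarith

theorem specRadius_lt {B : Matrix (Fin n) (Fin n) ℝ} (hess : EssNonneg B) (hirr : Irred B)
    (hsb : specBound B < 0) {a : ℝ} (ha : ∀ i, 0 < B i i + a) (hn : 0 < n) :
    specRadius (B + a • (1 : Matrix (Fin n) (Fin n) ℝ)) < a := by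
  set N := B + a • (1 : Matrix (Fin n) (Fin n) ℝ) with hNdef
  have hNa : ∀ i j, N i j = B i j + if i = j then a else 0 := by
    intro i j
    simp [hNdef, Matrix.add_apply, Matrix.smul_apply, Matrix.one_apply]
  have hN0 : ∀ i j, 0 ≤ N i j := by
    intro i j
    rw [hNa]
    by_cases h : i = j
    · subst h; simpa using (ha i).le
    · simpa [h] using hess i j h
  -- left Perron vector via the transpose
  have ha' : ∀ i, 0 < Bᵀ i i + a := fun i => ha i
  have hsb' : specBound Bᵀ < 0 := by rw [specBound_transpose]; exact hsb
  obtain ⟨c', w, hc'a, hw, hwe⟩ :=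
    key (essNonneg_transpose hess) (irred_transpose hirr) hsb' ha' hn
  have hNT : Bᵀ + a • (1 : Matrix (Fin n) (Fin n) ℝ) = Nᵀ := by
    rw [hNdef, Matrix.transpose_add, Matrix.transpose_smul, Matrix.transpose_one]
  rw [hNT] at hwe
  -- take an eigenvalue of maximal modulus
  obtain ⟨μ, hμ, habs⟩ := specRadius_mem N hn
  obtain ⟨v, hv, hveq⟩ := (isEig_iff N μ).mp hμ
  set u : Fin n → ℝ := fun i => ‖v i‖ with hudef
  have hu0 : ∀ i, 0 ≤ u i := fun i => norm_nonneg _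
  have subinv : ∀ i, ‖μ‖ * u i ≤ (N *ᵥ u) i := by
    intro i
    have h1 : (μ * v i) = ((cm N) *ᵥ v) i := by rw [hveq]; simp
    have h2 : ‖μ * v i‖ ≤ ∑ j, N i j * u j := by
      rw [h1]
      refine le_trans (norm_sum_le Finset.univ (fun j => cm N i j * v j)) ?_
      apply Finset.sum_le_sum
      intro j _
      simp only [cm, Matrix.map_apply]
      rw [norm_mul, Complex.norm_real, Real.norm_eq_abs, abs_of_nonneg (hN0 i j)]
    calc ‖μ‖ * u i = ‖μ * v i‖ := (norm_mul _ _).symm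
      _ ≤ ∑ j, N i j * u j := h2
      _ = (N *ᵥ u) i := rfl
  -- pair with the positive left eigenvector
  have hdot1 : ∑ i, w i * (‖μ‖ * u i) ≤ ∑ i, w i * (N *ᵥ u) i :=
    Finset.sum_le_sum fun i _ => mul_le_mul_of_nonneg_left (subinv i) (hw i).le
  have hdot2 : ∑ i, w i * (N *ᵥ u) i = c' * ∑ i, w i * u i := by
    have e1 : w ⬝ᵥ (N *ᵥ u) = (Nᵀ *ᵥ w) ⬝ᵥ u := by
      rw [Matrix.dotProduct_mulVec, Matrix.mulVec_transpose]
    rw [hwe] at e1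
    have e2 : (c' • w) ⬝ᵥ u = c' * (w ⬝ᵥ u) := by
      simp only [dotProduct, Pi.smul_apply, smul_eq_mul, Finset.mul_sum]
      exact Finset.sum_congr rfl fun i _ => by ring
    calc ∑ i, w i * (N *ᵥ u) i = w ⬝ᵥ (N *ᵥ u) := rfl
      _ = (c' • w) ⬝ᵥ u := e1
      _ = c' * (w ⬝ᵥ u) := e2
      _ = c' * ∑ i, w i * u i := rfl
  have hdot3 : ∑ i, w i * (‖μ‖ * u i) = ‖μ‖ * ∑ i, w i * u i := by
    rw [Finset.mul_sum]
    exact Finset.sum_congr rfl fun i _ => by ring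
  have hwu : 0 < ∑ i, w i * u i := by
    obtain ⟨i1, hi1⟩ := Function.ne_iff.mp hv
    have hui1 : 0 < u i1 := by
      rw [hudef]
      simp only []
      have : v i1 ≠ 0 := by simpa using hi1
      exact norm_pos_iff.mpr this
    apply Finset.sum_pos'
    · intro i _; exact mul_nonneg (hw i).le (hu0 i)
    · exact ⟨i1, Finset.mem_univ _, mul_pos (hw i1) hui1⟩
  have : ‖μ‖ ≤ c' := by
    rw [hdot3, hdot2] at hdot1
    exact le_of_mul_le_mul_right (by linarith) hwu
  rw [← habs]
  exact lt_of_le_of_lt this hc'a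

theorem entry_abs_le_norm (M : Matrix (Fin n) (Fin n) ℝ) (i j : Fin n) : |M i j| ≤ ‖M‖ := by
  have h1 : ‖M i j‖₊ ≤ ∑ k, ‖M i k‖₊ :=
    Finset.single_le_sum (f := fun k => ‖M i k‖₊) (fun k _ => zero_le) (Finset.mem_univ j)
  have h2 : (∑ k, ‖M i k‖₊) ≤ Finset.univ.sup fun i => ∑ k, ‖M i k‖₊ :=
    Finset.le_sup (f := fun i => ∑ k, ‖M i k‖₊) (Finset.mem_univ i)
  have h3 : ‖M i j‖₊ ≤ ‖M‖₊ := by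
    rw [Matrix.linfty_opNNNorm_def]
    exact h1.trans h2
  calc |M i j| = (‖M i j‖₊ : ℝ) := rfl
    _ ≤ (‖M‖₊ : ℝ) := by exact_mod_cast h3
    _ = ‖M‖ := rfl

theorem inv_neg_entries {B : Matrix (Fin n) (Fin n) ℝ} (hess : EssNonneg B) (hirr : Irred B)
    (hsb : specBound B < 0) (hn : 0 < n) : ∀ i j, B⁻¹ i j < 0 := by
  set a : ℝ := 1 + ‖B‖ with hadef
  have ha0 : 0 < a := by
    have := norm_nonneg B
    rw [hadef]; linarith
  have ha : ∀ i, 0 < B i i + a := by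
    intro i
    have h1 : |B i i| ≤ ‖B‖ := entry_abs_le_norm B i i
    have h2 : -(‖B‖) ≤ B i i := by cases abs_le.mp h1; linarith
    rw [hadef]; linarith
  set N := B + a • (1 : Matrix (Fin n) (Fin n) ℝ) with hNdef
  have hNa : ∀ i j, N i j = B i j + if i = j then a else 0 := by
    intro i j
    simp [hNdef, Matrix.add_apply, Matrix.smul_apply, Matrix.one_apply]
  have hN0 : ∀ i j, 0 ≤ N i j := by
    intro i j
    rw [hNa]
    by_cases h : i = j
    · subst h; simpa using (ha i).le
    · simpa [h] using hess i j h
  have hr : specRadius N < a := specRadius_lt hess hirr hsb ha hn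
  have hr0 : 0 ≤ specRadius N := specRadius_nonneg N hn
  set c : ℝ := (specRadius N + a) / 2 with hcdef
  have hc1 : specRadius N < c := by rw [hcdef]; linarith
  have hc2 : c < a := by rw [hcdef]; linarith
  have hc0 : 0 < c := by rw [hcdef]; linarith
  have hca : c / a < 1 := (div_lt_one ha0).mpr hc2
  have hca0 : 0 ≤ c / a := by positivity
  set x := (1 / a) • N with hxdef
  have hxk : ∀ k : ℕ, x ^ k = ((1 / a) ^ k) • N ^ k := fun k => smul_pow _ _ _
  have hev : ∀ᶠ k in atTop, ‖N ^ k‖ ≤ c ^ k := gelfand_bound N hn c hc1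
  have hnormx : ∀ᶠ k in atTop, ‖x ^ k‖ ≤ (c / a) ^ k := by
    filter_upwards [hev] with k hk
    rw [hxk, norm_smul, Real.norm_eq_abs, abs_of_pos (by positivity : (0:ℝ) < (1/a) ^ k)]
    calc (1 / a) ^ k * ‖N ^ k‖ ≤ (1 / a) ^ k * c ^ k := by
          apply mul_le_mul_of_nonneg_left hk (by positivity)
      _ = (c / a) ^ k := by rw [← mul_pow]; ring_nf
  have hsum : Summable (fun k : ℕ => x ^ k) := by
    apply Summable.of_norm_bounded_eventually_nat (summable_geometric_of_lt_one hca0 hca)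
    exact hnormx
  have htend : Tendsto (fun k : ℕ => x ^ k) atTop (𝓝 0) := by
    apply squeeze_zero_norm' hnormx
    exact tendsto_pow_atTop_nhds_zero_of_lt_one hca0 hca
  set T := ∑' k : ℕ, x ^ k with hTdef
  have h1sub : (1 : Matrix (Fin n) (Fin n) ℝ) - x = (-(1 / a)) • B := by
    rw [hxdef, hNdef, smul_add, smul_smul, one_div, inv_mul_cancel₀ (ne_of_gt ha0), one_smul]
    rw [neg_smul]
    abel
  have hdiff : HasSum (fun k : ℕ => x ^ k - x ^ (k + 1)) (1 : Matrix (Fin n) (Fin n) ℝ) := by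
    have hs2 : Summable (fun k : ℕ => x ^ (k + 1)) := by
      rw [← summable_nat_add_iff 1] at hsum
      exact hsum
    have hsud : Summable (fun k : ℕ => x ^ k - x ^ (k + 1)) := hsum.sub hs2
    have hpar := hsud.hasSum.tendsto_sum_nat
    have hparval : ∀ K : ℕ, ∑ k ∈ Finset.range K, (x ^ k - x ^ (k + 1)) = 1 - x ^ K := by
      intro K
      rw [Finset.sum_range_sub' (fun k => x ^ k)]
      simp
    have hpar2 : Tendsto (fun K : ℕ => ∑ k ∈ Finset.range K, (x ^ k - x ^ (k + 1))) atTop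
        (𝓝 (1 - 0)) := by
      simp_rw [hparval]
      exact tendsto_const_nhds.sub htend
    have : (∑' k : ℕ, (x ^ k - x ^ (k + 1))) = 1 - 0 := tendsto_nhds_unique hpar hpar2
    rw [sub_zero] at this
    exact this ▸ hsud.hasSum
  have hTl : ((1 : Matrix (Fin n) (Fin n) ℝ) - x) * T = 1 := by
    have h1 : (∑' k : ℕ, ((1 - x) * x ^ k)) = (1 - x) * T := (hsum.hasSum.mul_left (1 - x)).tsum_eq
    rw [← h1]
    have h2 : ∀ k : ℕ, (1 - x) * x ^ k = x ^ k - x ^ (k + 1) := by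
      intro k
      rw [sub_mul, one_mul, pow_succ']
    simp_rw [h2]
    exact hdiff.tsum_eq
  have hTr : T * ((1 : Matrix (Fin n) (Fin n) ℝ) - x) = 1 := by
    have h1 : (∑' k : ℕ, (x ^ k * (1 - x))) = T * (1 - x) := (hsum.hasSum.mul_right (1 - x)).tsum_eq
    rw [← h1]
    have h2 : ∀ k : ℕ, x ^ k * (1 - x) = x ^ k - x ^ (k + 1) := by
      intro k
      rw [mul_sub, mul_one, pow_succ]
    simp_rw [h2]
    exact hdiff.tsum_eq
  have hBr : B * ((-(1 / a)) • T) = 1 := by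
    rw [Matrix.mul_smul, ← Matrix.smul_mul, ← h1sub, hTl]
  have hinv : B⁻¹ = (-(1 / a)) • T := Matrix.inv_eq_right_inv hBr
  intro i j
  -- the (i,j) entry of T is positive
  set e : Matrix (Fin n) (Fin n) ℝ →ₗ[ℝ] ℝ :=
    { toFun := fun M => M i j, map_add' := fun _ _ => rfl, map_smul' := fun _ _ => rfl }
    with hedef
  have hecont : Continuous e := e.continuous_of_finiteDimensional
  have hentry : HasSum (fun k : ℕ => (x ^ k) i j) (T i j) := hsum.hasSum.map e hecont
  have hterm0 : ∀ k : ℕ, 0 ≤ (x ^ k) i j := by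
    intro k
    rw [hxk]
    simp only [Matrix.smul_apply, smul_eq_mul]
    exact mul_nonneg (by positivity) (pow_entry_nonneg hN0 k i j)
  obtain ⟨k0, hk0⟩ := reach hess hirr ha i j
  have htermpos : 0 < (x ^ k0) i j := by
    rw [hxk]
    simp only [Matrix.smul_apply, smul_eq_mul]
    exact mul_pos (by positivity) hk0
  have hTpos : 0 < T i j := by
    have h1 : (x ^ k0) i j ≤ ∑' k : ℕ, (x ^ k) i j :=
      Summable.le_tsum hentry.summable k0 (fun k _ => hterm0 k)
    rw [hentry.tsum_eq] at h1
    exact lt_of_lt_of_le htermpos h1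
  rw [hinv]
  simp only [Matrix.smul_apply, smul_eq_mul]
  have hna : -(1 / a) < 0 := by
    have : 0 < 1 / a := by positivity
    linarith
  exact mul_neg_of_neg_of_pos hna hTpos

theorem charpoly_eval (M : Matrix (Fin n) (Fin n) ℂ) (μ : ℂ) :
    M.charpoly.eval μ = ((Matrix.scalar (Fin n) μ) - M).det := by
  rw [Matrix.charpoly, eval_det, Matrix.matPolyEquiv_charmatrix]; simp

theorem det_isUnit {B : Matrix (Fin n) (Fin n) ℝ} (hsb : specBound B < 0) (hn : 0 < n) :
    IsUnit B.det := by
  rw [isUnit_iff_ne_zero]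
  intro h0
  have heig : IsEig B 0 := by
    unfold IsEig
    rw [Polynomial.IsRoot]
    rw [charpoly_eval]
    have h1 : Matrix.scalar (Fin n) (0 : ℂ) - (B.map (fun x => (x : ℂ))) =
        -(B.map (fun x => (x : ℂ))) := by
      rw [Matrix.scalar_apply, Matrix.diagonal_zero, zero_sub]
    rw [h1, Matrix.det_neg]
    have h2 : (B.map (fun x => (x : ℂ))).det = ((B.det : ℂ)) := by
      have := RingHom.map_det (Complex.ofRealHom) B
      exact this.symm
    rw [h2, h0]
    simp
  have := re_le_specBound heig
  simp at this
  linarith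

end PF

open PF in
theorem stmt_10 {n : ℕ} (B : Matrix (Fin n) (Fin n) ℝ)
    (hess : EssNonneg B) (hirr : Irred B) (hsb : specBound B < 0)
    (β : Fin n → ℝ) (hβ : ∀ j, 0 < β j) :
    0 < specRadius (-(B⁻¹ * Matrix.diagonal β)) ∧
      (∃ φ : Fin n → ℝ, (∀ j, 0 < φ j) ∧
        B.mulVec φ =
          -((1 / specRadius (-(B⁻¹ * Matrix.diagonal β))) •
            (Matrix.diagonal β).mulVec φ)) ∧
      (∀ lam : ℝ, ∀ φ : Fin n → ℝ, (∀ j, 0 < φ j) →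
        B.mulVec φ = -(lam • (Matrix.diagonal β).mulVec φ) →
        lam = 1 / specRadius (-(B⁻¹ * Matrix.diagonal β))) := by
  have hn : 0 < n := by
    rcases Nat.eq_zero_or_pos n with h0 | hn
    · exfalso
      subst h0
      have hempty : {x : ℝ | ∃ μ : ℂ, IsEig B μ ∧ μ.re = x} = ∅ := by
        ext x
        simp only [Set.mem_setOf_eq, Set.mem_empty_iff_false, iff_false, not_exists]
        rintro μ ⟨h, -⟩
        unfold IsEig at h
        rw [Matrix.charpoly, Matrix.det_isEmpty] at h
        simpa [Polynomial.IsRoot] using h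
      rw [specBound, hempty, Real.sSup_empty] at hsb
      exact absurd hsb (lt_irrefl 0)
    · exact hn
  set C := Matrix.diagonal β with hCdef
  set A := -(B⁻¹ * C) with hAdef
  have hdet : IsUnit B.det := det_isUnit hsb hn
  have hinvneg := inv_neg_entries hess hirr hsb hn
  have hApos : ∀ i j, 0 < A i j := by
    intro i j
    rw [hAdef]
    simp only [Matrix.neg_apply, hCdef, Matrix.mul_diagonal]
    nlinarith [hβ j, hinvneg i j]
  obtain ⟨hρ, φ, hφ, hφe⟩ := perron A hApos hn
  set ρ := specRadius A with hρdef
  have hBB : B * B⁻¹ = 1 := Matrix.mul_nonsing_inv B hdet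
  have hBB' : B⁻¹ * B = 1 := Matrix.nonsing_inv_mul B hdet
  refine ⟨hρ, ⟨φ, hφ, ?_⟩, ?_⟩
  · -- existence
    have h2 : B *ᵥ (A *ᵥ φ) = -(C *ᵥ φ) := by
      rw [hAdef, Matrix.neg_mulVec, Matrix.mulVec_neg, Matrix.mulVec_mulVec, ← Matrix.mul_assoc,
        hBB, Matrix.one_mul]
    rw [hφe, Matrix.mulVec_smul] at h2
    -- h2 : ρ • (B *ᵥ φ) = -(C *ᵥ φ)
    have h3 : (1 / ρ) • (ρ • (B *ᵥ φ)) = B *ᵥ φ := by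
      rw [smul_smul, one_div, inv_mul_cancel₀ (ne_of_gt hρ), one_smul]
    rw [h2, smul_neg] at h3
    exact h3.symm
  · -- uniqueness
    intro lam φ' hφ' heq
    have hφ'ne : φ' ≠ 0 := by
      intro h0
      have := hφ' ⟨0, hn⟩
      rw [h0] at this
      simp at this
    have hlam : lam ≠ 0 := by
      rintro rfl
      rw [zero_smul, neg_zero] at heq
      have hd0 : B.det = 0 := (Matrix.exists_mulVec_eq_zero_iff).mp ⟨φ', hφ'ne, heq⟩
      rw [hd0] at hdet
      simpa using hdet
    have hAφ : A *ᵥ φ' = (1 / lam) • φ' := by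
      have e1 : B⁻¹ *ᵥ (B *ᵥ φ') = φ' := by
        rw [Matrix.mulVec_mulVec, hBB', Matrix.one_mulVec]
      rw [heq, Matrix.mulVec_neg, Matrix.mulVec_smul] at e1
      -- e1 : -(lam • (B⁻¹ *ᵥ (C *ᵥ φ'))) = φ'
      have e2 : A *ᵥ φ' = -(B⁻¹ *ᵥ (C *ᵥ φ')) := by
        rw [hAdef, Matrix.neg_mulVec, Matrix.mulVec_mulVec]
      rw [e2]
      have e3 : (1 / lam) • φ' = -(B⁻¹ *ᵥ C *ᵥ φ') := by
        conv_lhs => rw [← e1]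
        rw [smul_neg, smul_smul, one_div, inv_mul_cancel₀ hlam, one_smul]
      rw [e3]
    have h4 := perron_unique A hApos hn (1 / lam) φ' hφ' hAφ
    rw [← hρdef] at h4
    rw [← h4, one_div_one_div]
end

section
/- Let L be a symmetric essentially nonnegative irreducible n×n matrix with zero column sums, let βⱼ, γⱼ > 0 and d > 0. Define, for nonzero v ∈ ℝⁿ, Q(v, d) = (Σⱼ βⱼ vⱼ²) / ( -d Σ_{j,k} L_{jk} vⱼ vₖ + Σⱼ γⱼ vⱼ² ). Then R₀(d) := sup_{v ≠ 0} Q(v, d) is nonincreasing in d, and R₀(d) is strictly decreasing in d unless (β₁,...,βₙ) is a scalar multiple of (γ₁,...,γₙ). -/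
open Matrix BigOperators

lemma key_id {n : ℕ} (L : Matrix (Fin n) (Fin n) ℝ) (hsym : L.IsSymm)
    (hcol : ∀ k, ∑ j, L j k = 0) (v : Fin n → ℝ) :
    ∑ j, ∑ k, L j k * (v j - v k) ^ 2 = -(2 * ∑ j, ∑ k, L j k * v j * v k) := by
  have hrow : ∀ j, ∑ k, L j k = 0 := by
    intro j
    calc ∑ k, L j k = ∑ k, L k j := Finset.sum_congr rfl fun k _ => (hsym.apply j k).symm
    _ = 0 := hcol j
  have h1 : ∑ j, ∑ k, L j k * (v j - v k) ^ 2
      = ∑ j, ∑ k, (L j k * v j ^ 2 + L j k * v k ^ 2 - 2 * (L j k * v j * v k)) :=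
    Finset.sum_congr rfl fun j _ => Finset.sum_congr rfl fun k _ => by ring
  have h2 : ∑ j, ∑ k, L j k * v j ^ 2 = 0 := by
    have : ∀ j, ∑ k, L j k * v j ^ 2 = (∑ k, L j k) * v j ^ 2 := fun j =>
      (Finset.sum_mul ..).symm
    simp [this, hrow]
  have h3 : ∑ j, ∑ k, L j k * v k ^ 2 = 0 := by
    rw [Finset.sum_comm]
    have : ∀ k, ∑ j, L j k * v k ^ 2 = (∑ j, L j k) * v k ^ 2 := fun k =>
      (Finset.sum_mul ..).symm
    simp [this, hcol]
  rw [h1]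
  simp only [Finset.sum_sub_distrib, Finset.sum_add_distrib, ← Finset.mul_sum, h2, h3]
  ring


lemma term_nonneg {n : ℕ} {L : Matrix (Fin n) (Fin n) ℝ} (hess : EssNonneg L)
    (v : Fin n → ℝ) (j k : Fin n) : 0 ≤ L j k * (v j - v k) ^ 2 := by
  rcases eq_or_ne j k with rfl | h
  · simp
  · exact mul_nonneg (hess j k h) (sq_nonneg _)

lemma qf_nonneg {n : ℕ} (L : Matrix (Fin n) (Fin n) ℝ) (hsym : L.IsSymm)
    (hess : EssNonneg L) (hcol : ∀ k, ∑ j, L j k = 0) (v : Fin n → ℝ) :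
    0 ≤ -(∑ j, ∑ k, L j k * v j * v k) := by
  have h := key_id L hsym hcol v
  have h0 : 0 ≤ ∑ j, ∑ k, L j k * (v j - v k) ^ 2 :=
    Finset.sum_nonneg fun j _ => Finset.sum_nonneg fun k _ => term_nonneg hess v j k
  linarith

lemma qf_pos {n : ℕ} (L : Matrix (Fin n) (Fin n) ℝ) (hsym : L.IsSymm)
    (hess : EssNonneg L)
    (hirr : ∀ S : Set (Fin n), S.Nonempty → S ≠ Set.univ → ∃ j ∉ S, ∃ k ∈ S, L j k ≠ 0)
    (hcol : ∀ k, ∑ j, L j k = 0) (v : Fin n → ℝ)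
    (hv : ∃ a b, v a ≠ v b) : 0 < -(∑ j, ∑ k, L j k * v j * v k) := by
  obtain ⟨a, b, hab⟩ := hv
  obtain ⟨j, hj, k, hk, hjk⟩ := hirr {k | v k = v a} ⟨a, rfl⟩ (by
    intro hS
    exact hab (by
      have : b ∈ {k | v k = v a} := hS ▸ Set.mem_univ b
      simpa using this.symm))
  have hvjk : v j ≠ v k := by
    simp only [Set.mem_setOf_eq] at hj hk
    rw [hk]; exact hj
  have hne : j ≠ k := fun h => hvjk (h ▸ rfl)
  have hpos : 0 < L j k * (v j - v k) ^ 2 :=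
    mul_pos (lt_of_le_of_ne (hess j k hne) (Ne.symm hjk))
      (by have := sub_ne_zero_of_ne hvjk; positivity)
  have h0 : 0 < ∑ j, ∑ k, L j k * (v j - v k) ^ 2 := by
    apply Finset.sum_pos' (fun j _ => Finset.sum_nonneg fun k _ => term_nonneg hess v j k)
    exact ⟨j, Finset.mem_univ j, Finset.sum_pos' (fun k _ => term_nonneg hess v j k)
      ⟨k, Finset.mem_univ k, hpos⟩⟩
  have h := key_id L hsym hcol v
  linarith

lemma wsum_pos {n : ℕ} (c : Fin n → ℝ) (hc : ∀ j, 0 < c j) (v : Fin n → ℝ)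
    (hv : v ≠ 0) : 0 < ∑ j, c j * v j ^ 2 := by
  obtain ⟨j, hj⟩ := Function.ne_iff.mp hv
  have hj' : v j ≠ 0 := by simpa using hj
  exact Finset.sum_pos' (fun i _ => mul_nonneg (hc i).le (sq_nonneg _))
    ⟨j, Finset.mem_univ j, mul_pos (hc j) (by positivity)⟩

lemma exists_gt_rho {n : ℕ} (L : Matrix (Fin n) (Fin n) ℝ) (hsym : L.IsSymm)
    (hess : EssNonneg L) (hcol : ∀ k, ∑ j, L j k = 0)
    (β γ : Fin n → ℝ) (hβ : ∀ j, 0 < β j) (hγ : ∀ j, 0 < γ j)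
    (d : ℝ) (hd : 0 < d) (hne : ¬ ∃ c : ℝ, ∀ j, β j = c * γ j) :
    ∃ v : Fin n → ℝ, v ≠ 0 ∧ (∑ j, β j) / (∑ j, γ j) <
      (∑ j, β j * v j ^ 2) /
        (-(d * ∑ j, ∑ k, L j k * v j * v k) + ∑ j, γ j * v j ^ 2) := by
  haveI hNE : Nonempty (Fin n) := by
    by_contra h
    exact hne ⟨0, fun j => ((h ⟨j⟩).elim)⟩
  have hrow : ∀ j, ∑ k, L j k = 0 := by
    intro j
    calc ∑ k, L j k = ∑ k, L k j := Finset.sum_congr rfl fun k _ => (hsym.apply j k).symm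
    _ = 0 := hcol j
  have hγs : 0 < ∑ j, γ j := Finset.sum_pos (fun j _ => hγ j) Finset.univ_nonempty
  set ρ := (∑ j, β j) / (∑ j, γ j) with hρdef
  have hρ2 : (∑ j, β j) = ρ * ∑ j, γ j := (div_mul_cancel₀ _ (ne_of_gt hγs)).symm
  set w := fun j => β j - ρ * γ j with hwdef
  set s := ∑ j, w j ^ 2 with hsdef
  have hs : 0 < s := by
    rcases lt_or_eq_of_le (Finset.sum_nonneg fun j _ => sq_nonneg (w j)) with h | h
    · exact h
    · exfalso
      apply hne
      refine ⟨ρ, fun j => ?_⟩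
      have := (Finset.sum_eq_zero_iff_of_nonneg (fun j _ => sq_nonneg (w j))).mp h.symm
        j (Finset.mem_univ j)
      have hwj : w j = 0 := by
        have := sq_eq_zero_iff.mp this
        exact this
      simp only [hwdef] at hwj
      linarith
  set A := (∑ j, β j * w j ^ 2) - ρ * (∑ j, γ j * w j ^ 2)
      + ρ * d * (∑ j, ∑ k, L j k * w j * w k) with hAdef
  set ε := s / (1 + |A|) with hεdef
  have hA1 : 0 < 1 + |A| := by positivity
  have hε : 0 < ε := div_pos hs hA1
  have hεA : ε * (1 + |A|) = s := div_mul_cancel₀ _ (ne_of_gt hA1)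
  set v := fun j => 1 + ε * w j with hvdef
  -- expansions
  have e1 : ∑ j, β j * v j ^ 2
      = (∑ j, β j) + 2 * ε * (∑ j, β j * w j) + ε ^ 2 * (∑ j, β j * w j ^ 2) := by
    have t : ∀ j, β j * v j ^ 2
        = β j + 2 * ε * (β j * w j) + ε ^ 2 * (β j * w j ^ 2) := fun j => by
      simp only [hvdef]; ring
    simp only [t, Finset.sum_add_distrib, ← Finset.mul_sum]
  have e2 : ∑ j, γ j * v j ^ 2
      = (∑ j, γ j) + 2 * ε * (∑ j, γ j * w j) + ε ^ 2 * (∑ j, γ j * w j ^ 2) := by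
    have t : ∀ j, γ j * v j ^ 2
        = γ j + 2 * ε * (γ j * w j) + ε ^ 2 * (γ j * w j ^ 2) := fun j => by
      simp only [hvdef]; ring
    simp only [t, Finset.sum_add_distrib, ← Finset.mul_sum]
  have hz1 : ∑ j, ∑ k, L j k = 0 := by
    simp [hrow]
  have hz2 : ∑ j, ∑ k, L j k * w k = 0 := by
    rw [Finset.sum_comm]
    refine Finset.sum_eq_zero fun k _ => ?_
    rw [← Finset.sum_mul, hcol, zero_mul]
  have hz3 : ∑ j, ∑ k, L j k * w j = 0 := by
    refine Finset.sum_eq_zero fun j _ => ?_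
    rw [← Finset.sum_mul, hrow, zero_mul]
  have e3 : ∑ j, ∑ k, L j k * v j * v k
      = ε ^ 2 * ∑ j, ∑ k, L j k * w j * w k := by
    have t : ∀ j k, L j k * v j * v k
        = L j k + ε * (L j k * w k) + ε * (L j k * w j)
          + ε ^ 2 * (L j k * w j * w k) := fun j k => by
      simp only [hvdef]; ring
    simp only [t, Finset.sum_add_distrib, ← Finset.mul_sum]
    rw [hz1, hz2, hz3]
    ring
  have hsum : (∑ j, β j * w j) - ρ * (∑ j, γ j * w j) = s := by
    rw [hsdef, Finset.mul_sum, ← Finset.sum_sub_distrib]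
    refine Finset.sum_congr rfl fun j _ => ?_
    simp only [hwdef]; ring
  have key : (∑ j, β j * v j ^ 2)
      - ρ * (-(d * ∑ j, ∑ k, L j k * v j * v k) + ∑ j, γ j * v j ^ 2)
      = 2 * ε * s + ε ^ 2 * A := by
    rw [e1, e2, e3, hAdef]
    linear_combination hρ2 + 2 * ε * hsum
  have pos : 0 < 2 * ε * s + ε ^ 2 * A := by
    nlinarith [neg_abs_le A, sq_nonneg ε, mul_pos hε hs, abs_nonneg A]
  have hv0 : v ≠ 0 := by
    intro h
    rw [h] at key
    simp at key
    linarith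
  have hD : 0 < -(d * ∑ j, ∑ k, L j k * v j * v k) + ∑ j, γ j * v j ^ 2 := by
    have hq := qf_nonneg L hsym hess hcol v
    have hG := wsum_pos γ hγ v hv0
    nlinarith
  exact ⟨v, hv0, (lt_div_iff₀ hD).mpr (by linarith)⟩

lemma sum_sq_smul {n : ℕ} (β : Fin n → ℝ) (c : ℝ) (v : Fin n → ℝ) :
    ∑ j, β j * (c * v j) ^ 2 = c ^ 2 * ∑ j, β j * v j ^ 2 := by
  rw [Finset.mul_sum]
  exact Finset.sum_congr rfl fun j _ => by ring

lemma quad_smul {n : ℕ} (L : Matrix (Fin n) (Fin n) ℝ) (c : ℝ) (v : Fin n → ℝ) :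
    ∑ j, ∑ k, L j k * (c * v j) * (c * v k)
      = c ^ 2 * ∑ j, ∑ k, L j k * v j * v k := by
  rw [Finset.mul_sum]
  refine Finset.sum_congr rfl fun j _ => ?_
  rw [Finset.mul_sum]
  exact Finset.sum_congr rfl fun k _ => by ring

lemma Q_scale {n : ℕ} (L : Matrix (Fin n) (Fin n) ℝ) (β γ : Fin n → ℝ)
    (d c : ℝ) (hc : c ≠ 0) (v : Fin n → ℝ) :
    (∑ j, β j * (c * v j) ^ 2) /
        (-(d * ∑ j, ∑ k, L j k * (c * v j) * (c * v k)) + ∑ j, γ j * (c * v j) ^ 2)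
      = (∑ j, β j * v j ^ 2) /
        (-(d * ∑ j, ∑ k, L j k * v j * v k) + ∑ j, γ j * v j ^ 2) := by
  rw [sum_sq_smul, sum_sq_smul, quad_smul]
  rw [show -(d * (c ^ 2 * ∑ j, ∑ k, L j k * v j * v k)) + c ^ 2 * ∑ j, γ j * v j ^ 2
      = c ^ 2 * (-(d * ∑ j, ∑ k, L j k * v j * v k) + ∑ j, γ j * v j ^ 2) by ring]
  exact mul_div_mul_left _ _ (pow_ne_zero 2 hc)


theorem stmt_13 {n : ℕ} (L : Matrix (Fin n) (Fin n) ℝ)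
    (hsym : L.IsSymm) (hess : EssNonneg L) (hirr : Irred L)
    (hcol : ∀ k, ∑ j, L j k = 0)
    (β γ : Fin n → ℝ) (hβ : ∀ j, 0 < β j) (hγ : ∀ j, 0 < γ j)
    (R : ℝ → ℝ)
    (hR : ∀ d : ℝ, R d = sSup {r : ℝ | ∃ v : Fin n → ℝ, v ≠ 0 ∧
      r = (∑ j, β j * v j ^ 2) /
        (-(d * ∑ j, ∑ k, L j k * v j * v k) + ∑ j, γ j * v j ^ 2)}) :
    AntitoneOn R (Set.Ioi 0) ∧
      ((¬ ∃ c : ℝ, ∀ j, β j = c * γ j) → StrictAntiOn R (Set.Ioi 0)) := by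
  classical
  rcases Nat.eq_zero_or_pos n with hn | hn
  · -- degenerate case n = 0
    subst hn
    have hR0 : ∀ d, R d = 0 := by
      intro d
      rw [hR d]
      have hset : {r : ℝ | ∃ v : Fin 0 → ℝ, v ≠ 0 ∧
          r = (∑ j, β j * v j ^ 2) /
            (-(d * ∑ j, ∑ k, L j k * v j * v k) + ∑ j, γ j * v j ^ 2)} = ∅ := by
        ext r
        simp only [Set.mem_setOf_eq, Set.mem_empty_iff_false, iff_false, not_exists]
        rintro v ⟨hv, -⟩
        exact hv (Subsingleton.elim v 0)
      rw [hset, Real.sSup_empty]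
    refine ⟨fun a _ b _ _ => by rw [hR0, hR0], fun hne => absurd ⟨0, fun j => j.elim0⟩ hne⟩
  -- main case n ≥ 1
  haveI hNE : Nonempty (Fin n) := Fin.pos_iff_nonempty.mp hn
  obtain ⟨j₀⟩ := id hNE
  have hrow : ∀ j, ∑ k, L j k = 0 := by
    intro j
    calc ∑ k, L j k = ∑ k, L k j := Finset.sum_congr rfl fun k _ => (hsym.apply j k).symm
    _ = 0 := hcol j
  set Q : ℝ → (Fin n → ℝ) → ℝ := fun d v => (∑ j, β j * v j ^ 2) /
      (-(d * ∑ j, ∑ k, L j k * v j * v k) + ∑ j, γ j * v j ^ 2) with hQdef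
  set Sset : ℝ → Set ℝ := fun d => {r : ℝ | ∃ v : Fin n → ℝ, v ≠ 0 ∧ r = Q d v}
    with hSdef
  have hRS : ∀ d, R d = sSup (Sset d) := hR
  have hDpos : ∀ d : ℝ, 0 ≤ d → ∀ v : Fin n → ℝ, v ≠ 0 →
      0 < -(d * ∑ j, ∑ k, L j k * v j * v k) + ∑ j, γ j * v j ^ 2 := by
    intro d hd v hv
    have h1 := qf_nonneg L hsym hess hcol v
    have h2 := wsum_pos γ hγ v hv
    nlinarith
  have hBpos : ∀ v : Fin n → ℝ, v ≠ 0 → 0 < ∑ j, β j * v j ^ 2 := wsum_pos β hβ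
  have hQnn : ∀ d : ℝ, 0 ≤ d → ∀ v : Fin n → ℝ, v ≠ 0 → 0 ≤ Q d v := fun d hd v hv =>
    div_nonneg (hBpos v hv).le (hDpos d hd v hv).le
  -- upper bound
  set C : ℝ := Finset.univ.sup' ⟨j₀, Finset.mem_univ j₀⟩ (fun j => β j / γ j) with hCdef
  have hC0 : 0 ≤ C := by
    rw [hCdef]
    exact le_trans (div_pos (hβ j₀) (hγ j₀)).le (Finset.le_sup' (fun j => β j / γ j) (Finset.mem_univ j₀))
  have hCb : ∀ d : ℝ, 0 ≤ d → ∀ r ∈ Sset d, r ≤ C := by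
    rintro d hd r ⟨v, hv, rfl⟩
    have hD := hDpos d hd v hv
    rw [hQdef, div_le_iff₀ hD]
    have hBG : (∑ j, β j * v j ^ 2) ≤ C * ∑ j, γ j * v j ^ 2 := by
      rw [Finset.mul_sum]
      refine Finset.sum_le_sum fun j _ => ?_
      have h1 : β j * v j ^ 2 = (β j / γ j) * (γ j * v j ^ 2) := by
        rw [div_mul_eq_mul_div, mul_div_assoc, mul_div_cancel_left₀ _ (ne_of_gt (hγ j))]
      rw [h1, hCdef]
      exact mul_le_mul_of_nonneg_right (Finset.le_sup' (fun j => β j / γ j) (Finset.mem_univ j))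
        (mul_nonneg (hγ j).le (sq_nonneg _))
    have hq := qf_nonneg L hsym hess hcol v
    nlinarith [mul_nonneg hC0 (mul_nonneg hd hq)]
  have hbdd : ∀ d : ℝ, 0 ≤ d → BddAbove (Sset d) := fun d hd =>
    ⟨C, fun r hr => hCb d hd r hr⟩
  have honem : ∀ d : ℝ, Q d (fun _ => 1) ∈ Sset d := by
    intro d
    exact ⟨fun _ => 1, by
      intro h
      have := congrFun h j₀
      simp at this, rfl⟩
  have hsup_nn : ∀ d : ℝ, 0 < d → 0 ≤ sSup (Sset d) := by
    intro d hd
    refine le_trans (hQnn d hd.le (fun _ => 1) ?_) (le_csSup (hbdd d hd.le) (honem d))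
    intro h
    have := congrFun h j₀
    simp at this
  -- monotone comparison of Q in d
  have hQmono : ∀ (d₁ d₂ : ℝ), 0 < d₁ → d₁ ≤ d₂ → ∀ v : Fin n → ℝ, v ≠ 0 →
      Q d₂ v ≤ Q d₁ v := by
    intro d₁ d₂ hd1 h12 v hv
    have hq := qf_nonneg L hsym hess hcol v
    have hD1 := hDpos d₁ hd1.le v hv
    exact div_le_div_of_nonneg_left (hBpos v hv).le hD1 (by nlinarith)
  have hanti : AntitoneOn R (Set.Ioi 0) := by
    intro a ha b hb hab
    rw [hRS a, hRS b]
    refine Real.sSup_le ?_ (hsup_nn a ha)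
    rintro r ⟨v, hv, rfl⟩
    exact le_trans (hQmono a b ha hab v hv) (le_csSup (hbdd a (le_of_lt ha)) ⟨v, hv, rfl⟩)
  refine ⟨hanti, ?_⟩
  intro hne a ha b hb hab
  rw [Set.mem_Ioi] at ha hb
  rw [hRS a, hRS b]
  -- attainment of the supremum at parameter b on the unit sphere
  have hconB : Continuous fun v : Fin n → ℝ => ∑ j, β j * v j ^ 2 :=
    continuous_finset_sum _ fun j _ => continuous_const.mul ((continuous_apply j).pow 2)
  have hconD : Continuous fun v : Fin n → ℝ =>
      -(b * ∑ j, ∑ k, L j k * v j * v k) + ∑ j, γ j * v j ^ 2 := by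
    refine Continuous.add (Continuous.neg (continuous_const.mul ?_))
      (continuous_finset_sum _ fun j _ => continuous_const.mul ((continuous_apply j).pow 2))
    exact continuous_finset_sum _ fun j _ => continuous_finset_sum _ fun k _ =>
      (continuous_const.mul (continuous_apply j)).mul (continuous_apply k)
  have hnz : ∀ v ∈ Metric.sphere (0 : Fin n → ℝ) 1, v ≠ 0 := by
    intro v hv h
    rw [mem_sphere_zero_iff_norm, h] at hv
    simp at hv
  have hcont : ContinuousOn (Q b) (Metric.sphere (0 : Fin n → ℝ) 1) :=
    ContinuousOn.div hconB.continuousOn hconD.continuousOn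
      fun v hv => ne_of_gt (hDpos b hb.le v (hnz v hv))
  have hvone_mem : (fun _ : Fin n => (1 : ℝ)) ∈ Metric.sphere (0 : Fin n → ℝ) 1 := by
    rw [mem_sphere_zero_iff_norm]
    rw [pi_norm_const]
    norm_num
  obtain ⟨vs, hvs, hmax⟩ := (isCompact_sphere (0 : Fin n → ℝ) 1).exists_isMaxOn
    ⟨_, hvone_mem⟩ hcont
  have hvs0 : vs ≠ 0 := hnz vs hvs
  -- scale invariance
  have hscale : ∀ (d : ℝ) (v : Fin n → ℝ), v ≠ 0 → Q d (‖v‖⁻¹ • v) = Q d v := by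
    intro d v hv
    have hc : ‖v‖⁻¹ ≠ 0 := inv_ne_zero (norm_ne_zero_iff.mpr hv)
    have : ∀ j, (‖v‖⁻¹ • v) j = ‖v‖⁻¹ * v j := fun j => rfl
    simp only [hQdef, this]
    exact Q_scale L β γ d _ hc v
  have hmem_scale : ∀ v : Fin n → ℝ, v ≠ 0 →
      (‖v‖⁻¹ • v) ∈ Metric.sphere (0 : Fin n → ℝ) 1 := by
    intro v hv
    rw [mem_sphere_zero_iff_norm]
    exact norm_smul_inv_norm (𝕜 := ℝ) hv
  have hsup : sSup (Sset b) = Q b vs := by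
    refine le_antisymm (Real.sSup_le ?_ (hQnn b hb.le vs hvs0))
      (le_csSup (hbdd b hb.le) ⟨vs, hvs0, rfl⟩)
    rintro r ⟨v, hv, rfl⟩
    rw [← hscale b v hv]
    exact hmax (hmem_scale v hv)
  -- the maximizer is nonconstant
  have hnc : ∃ p q, vs p ≠ vs q := by
    by_contra hcon
    push_neg at hcon
    set c := vs j₀ with hcdef
    have hc0 : c ≠ 0 := by
      intro h
      apply hvs0
      funext j
      rw [hcon j j₀, ← hcdef, h]
      rfl
    have hBvs : ∑ j, β j * vs j ^ 2 = (∑ j, β j) * c ^ 2 := by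
      rw [Finset.sum_mul]
      exact Finset.sum_congr rfl fun j _ => by rw [hcon j j₀]
    have hGvs : ∑ j, γ j * vs j ^ 2 = (∑ j, γ j) * c ^ 2 := by
      rw [Finset.sum_mul]
      exact Finset.sum_congr rfl fun j _ => by rw [hcon j j₀]
    have hqvs : ∑ j, ∑ k, L j k * vs j * vs k = 0 := by
      have t : ∀ j k, L j k * vs j * vs k = L j k * (c * c) := fun j k => by
        rw [hcon j j₀, hcon k j₀]; ring
      simp only [t, ← Finset.sum_mul]
      simp [hrow]
    have hQρ : Q b vs = (∑ j, β j) / (∑ j, γ j) := by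
      rw [hQdef]
      simp only [hBvs, hGvs, hqvs, mul_zero, neg_zero, zero_add]
      exact mul_div_mul_right _ _ (pow_ne_zero 2 hc0)
    obtain ⟨u, hu0, hu⟩ := exists_gt_rho L hsym hess hcol β γ hβ hγ b hb hne
    have hle : Q b u ≤ Q b vs := by
      rw [← hscale b u hu0]
      exact hmax (hmem_scale u hu0)
    rw [hQρ] at hle
    exact absurd (lt_of_lt_of_le hu hle) (lt_irrefl _)
  -- strict comparison
  have hq := qf_pos L hsym hess hirr hcol vs hnc
  have hD1 : 0 < -(a * ∑ j, ∑ k, L j k * vs j * vs k) + ∑ j, γ j * vs j ^ 2 :=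
    hDpos a ha.le vs hvs0
  have hlt : Q b vs < Q a vs := by
    rw [hQdef]
    exact div_lt_div_of_pos_left (hBpos vs hvs0) hD1 (by nlinarith)
  rw [hsup]
  exact lt_of_lt_of_le hlt (le_csSup (hbdd a ha.le) ⟨vs, hvs0, rfl⟩)
end

section
/- Let L be a symmetric essentially nonnegative irreducible n×n matrix with zero column sums, βⱼ, γⱼ > 0, d > 0, and define R₀(d) = sup_{v≠0} (Σⱼ βⱼ vⱼ²)/(-d Σ_{j,k} L_{jk} vⱼvₖ + Σⱼ γⱼ vⱼ²). Then lim_{d→0} R₀(d) = max_j βⱼ/γⱼ and lim_{d→∞} R₀(d) = (Σⱼ βⱼ)/(Σⱼ γⱼ). -/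
open Matrix BigOperators

section aux
variable {n : ℕ} (L : Matrix (Fin n) (Fin n) ℝ)

lemma my_hrow (hsym : L.IsSymm) (hcol : ∀ k, ∑ j, L j k = 0) (j : Fin n) :
    ∑ k, L j k = 0 := by
  rw [← hcol j]
  exact Finset.sum_congr rfl fun k _ => hsym.apply k j

lemma my_ident (hsym : L.IsSymm) (hcol : ∀ k, ∑ j, L j k = 0) (v : Fin n → ℝ) :
    ∑ j, ∑ k, L j k * (v j - v k)^2 = -2 * ∑ j, ∑ k, L j k * v j * v k := by
  have h1 : ∀ j, ∑ k, L j k * (v j - v k)^2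
      = v j ^2 * ∑ k, L j k - 2 * ∑ k, L j k * v j * v k + ∑ k, L j k * v k ^ 2 := by
    intro j
    rw [Finset.mul_sum, Finset.mul_sum, ← Finset.sum_sub_distrib, ← Finset.sum_add_distrib]
    refine Finset.sum_congr rfl fun k _ => by ring
  simp_rw [h1, my_hrow L hsym hcol, Finset.sum_add_distrib, Finset.sum_sub_distrib]
  rw [Finset.sum_comm (f := fun j k => L j k * v k ^ 2)]
  have h2 : ∀ k, ∑ j, L j k * v k ^ 2 = (∑ j, L j k) * v k ^2 := by
    intro k; rw [Finset.sum_mul]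
  simp_rw [h2, hcol]
  simp only [mul_zero, zero_mul, Finset.sum_const_zero, ← Finset.mul_sum]
  ring


lemma my_q_nonneg (hsym : L.IsSymm) (hess : EssNonneg L) (hcol : ∀ k, ∑ j, L j k = 0)
    (v : Fin n → ℝ) : 0 ≤ -(∑ j, ∑ k, L j k * v j * v k) := by
  have h := my_ident L hsym hcol v
  have h2 : (0:ℝ) ≤ ∑ j, ∑ k, L j k * (v j - v k)^2 := by
    refine Finset.sum_nonneg fun j _ => Finset.sum_nonneg fun k _ => ?_
    rcases eq_or_ne j k with rfl | hjk
    · simp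
    · exact mul_nonneg (hess j k hjk) (sq_nonneg _)
  nlinarith [h2, h]

lemma my_rigid (hsym : L.IsSymm) (hess : EssNonneg L) (hirr : Irred L)
    (hcol : ∀ k, ∑ j, L j k = 0) (v : Fin n → ℝ)
    (hq : ∑ j, ∑ k, L j k * v j * v k = 0) : ∀ j k, v j = v k := by
  have hid := my_ident L hsym hcol v
  rw [hq, mul_zero] at hid
  have hterm : ∀ j ∈ Finset.univ, ∀ k ∈ Finset.univ, L j k * (v j - v k)^2 = 0 := by
    have h0 : ∀ j ∈ (Finset.univ : Finset (Fin n)), ∑ k, L j k * (v j - v k)^2 = 0 := by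
      rw [← Finset.sum_eq_zero_iff_of_nonneg] 
      · exact hid
      · intro j _
        refine Finset.sum_nonneg fun k _ => ?_
        rcases eq_or_ne j k with rfl | hjk
        · simp
        · exact mul_nonneg (hess j k hjk) (sq_nonneg _)
    intro j hj
    rw [← Finset.sum_eq_zero_iff_of_nonneg]
    · exact h0 j hj
    · intro k _
      rcases eq_or_ne j k with rfl | hjk
      · simp
      · exact mul_nonneg (hess j k hjk) (sq_nonneg _)
  intro j k
  set S : Set (Fin n) := {i | v i = v k} with hS
  have hkS : k ∈ S := rfl
  have hSuniv : S = Set.univ := by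
    by_contra hne
    obtain ⟨a, haS, b, hbS, hab⟩ := hirr S ⟨k, hkS⟩ hne
    have h := hterm a (Finset.mem_univ a) b (Finset.mem_univ b)
    have : (v a - v b)^2 = 0 := by
      rcases mul_eq_zero.1 h with h' | h'
      · exact absurd h' hab
      · exact h'
    have hva : v a = v b := by nlinarith [this]
    exact haS (by rw [hS]; exact hva.trans hbS)
  have : j ∈ S := hSuniv ▸ Set.mem_univ j
  exact this

lemma my_scale (c : ℝ) (w : Fin n → ℝ) :
    ∑ j, ∑ k, L j k * (c * w j) * (c * w k) = c^2 * ∑ j, ∑ k, L j k * w j * w k := by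
  rw [Finset.mul_sum]
  refine Finset.sum_congr rfl fun j _ => ?_
  rw [Finset.mul_sum]
  exact Finset.sum_congr rfl fun k _ => by ring

lemma my_shift (hsym : L.IsSymm) (hcol : ∀ k, ∑ j, L j k = 0) (c : ℝ) (w : Fin n → ℝ) :
    ∑ j, ∑ k, L j k * (w j + c) * (w k + c) = ∑ j, ∑ k, L j k * w j * w k := by
  have h1 : ∀ j, ∑ k, L j k * (w j + c) * (w k + c)
      = (∑ k, L j k * w j * w k) + (w j + c) * c * (∑ k, L j k)
        + c * ∑ k, L j k * w k := by
    intro j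
    rw [Finset.mul_sum, Finset.mul_sum, ← Finset.sum_add_distrib,
      ← Finset.sum_add_distrib]
    exact Finset.sum_congr rfl fun k _ => by ring
  simp_rw [h1, my_hrow L hsym hcol, mul_zero, add_zero, Finset.sum_add_distrib,
    ← Finset.mul_sum]
  rw [Finset.sum_comm (f := fun j k => L j k * w k)]
  have h2 : ∀ k, ∑ j, L j k * w k = (∑ j, L j k) * w k := by intro k; rw [Finset.sum_mul]
  simp_rw [h2, hcol, zero_mul, Finset.sum_const_zero, mul_zero, add_zero]

lemma my_gap (hn : 0 < n) (hsym : L.IsSymm) (hess : EssNonneg L) (hirr : Irred L)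
    (hcol : ∀ k, ∑ j, L j k = 0) :
    ∃ lam > (0:ℝ), ∀ w : Fin n → ℝ, (∑ j, w j) = 0 →
      lam * ∑ j, (w j)^2 ≤ -(∑ j, ∑ k, L j k * w j * w k) := by
  set S : Set (Fin n → ℝ) := {w | (∑ j, (w j)^2) = 1 ∧ (∑ j, w j) = 0} with hSdef
  have hqcont : Continuous fun w : Fin n → ℝ => -(∑ j, ∑ k, L j k * w j * w k) := by
    fun_prop
  have hSclosed : IsClosed S := by
    have h1 : IsClosed {w : Fin n → ℝ | (∑ j, (w j)^2) = 1} :=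
      isClosed_eq (by fun_prop) continuous_const
    have h2 : IsClosed {w : Fin n → ℝ | (∑ j, w j) = 0} :=
      isClosed_eq (by fun_prop) continuous_const
    exact h1.inter h2
  have hSsub : S ⊆ Metric.closedBall 0 1 := by
    intro w hw
    rw [Metric.mem_closedBall, dist_zero_right]
    refine (pi_norm_le_iff_of_nonneg zero_le_one).2 fun j => ?_
    have h1 : (w j)^2 ≤ 1 := by
      rw [← hw.1]
      exact Finset.single_le_sum (fun i _ => sq_nonneg (w i)) (Finset.mem_univ j)
    rw [Real.norm_eq_abs]
    exact abs_le.2 ⟨by nlinarith, by nlinarith⟩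
  have hScompact : IsCompact S :=
    (isCompact_closedBall (0 : Fin n → ℝ) 1).of_isClosed_subset hSclosed hSsub
  obtain ⟨lam, hlampos, hlamS⟩ :
      ∃ lam > (0:ℝ), ∀ w ∈ S, lam ≤ -(∑ j, ∑ k, L j k * w j * w k) := by
    rcases Set.eq_empty_or_nonempty S with hSe | hSne
    · exact ⟨1, one_pos, fun w hw => by rw [hSe] at hw; exact absurd hw (Set.notMem_empty w)⟩
    · obtain ⟨w₀, hw₀S, hmin⟩ := hScompact.exists_isMinOn hSne hqcont.continuousOn
      refine ⟨-(∑ j, ∑ k, L j k * w₀ j * w₀ k), ?_, fun w hw => hmin hw⟩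
      rcases lt_or_eq_of_le (my_q_nonneg L hsym hess hcol w₀) with h | h
      · exact h
      · exfalso
        have hq0 : ∑ j, ∑ k, L j k * w₀ j * w₀ k = 0 := by linarith
        have hconst := my_rigid L hsym hess hirr hcol w₀ hq0
        have j₀ : Fin n := ⟨0, hn⟩
        have hsum : ∑ j, w₀ j = (n : ℝ) * w₀ j₀ := by
          rw [Finset.sum_congr rfl fun j _ => hconst j j₀]
          simp [Finset.sum_const, Finset.card_univ, mul_comm]
        have hz : w₀ j₀ = 0 := by
          have := hw₀S.2
          rw [hsum] at this
          have hnn : (n : ℝ) ≠ 0 := Nat.cast_ne_zero.2 hn.ne'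
          exact (mul_eq_zero.1 this).resolve_left hnn
        have : ∑ j, (w₀ j)^2 = 0 := by
          refine Finset.sum_eq_zero fun j _ => ?_
          rw [hconst j j₀, hz]; ring
        rw [hw₀S.1] at this
        exact one_ne_zero this
  refine ⟨lam, hlampos, fun w hw => ?_⟩
  set e := ∑ j, (w j)^2 with he
  have hen : 0 ≤ e := Finset.sum_nonneg fun j _ => sq_nonneg _
  rcases eq_or_lt_of_le hen with he0 | hepos
  · rw [← he0, mul_zero]
    exact my_q_nonneg L hsym hess hcol w
  · set t := Real.sqrt e with ht
    have htpos : 0 < t := Real.sqrt_pos.2 hepos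
    have ht2 : t^2 = e := Real.sq_sqrt hen
    have hwS : (fun j => t⁻¹ * w j) ∈ S := by
      constructor
      · have : ∑ j, (t⁻¹ * w j)^2 = t⁻¹^2 * e := by
          rw [Finset.mul_sum]
          exact Finset.sum_congr rfl fun j _ => by ring
        rw [this, ← ht2]
        field_simp
      · have : ∑ j, t⁻¹ * w j = t⁻¹ * ∑ j, w j := by rw [Finset.mul_sum]
        rw [this, hw, mul_zero]
    have hle := hlamS _ hwS
    have hsc := my_scale L t⁻¹ w
    rw [hsc] at hle
    have h3 : lam * t^2 ≤ t^2 * (-(t⁻¹^2 * ∑ j, ∑ k, L j k * w j * w k)) := by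
      nlinarith [sq_nonneg t]
    have h4 : t^2 * (t⁻¹^2) = 1 := by
      field_simp
    calc lam * e = lam * t^2 := by rw [ht2]
      _ ≤ t^2 * (-(t⁻¹^2 * ∑ j, ∑ k, L j k * w j * w k)) := h3
      _ = -(∑ j, ∑ k, L j k * w j * w k) := by
          rw [mul_neg, ← mul_assoc, h4, one_mul]

end aux

set_option maxHeartbeats 1000000 in
theorem stmt_14 {n : ℕ} (hn : 0 < n) (L : Matrix (Fin n) (Fin n) ℝ)
    (hsym : L.IsSymm) (hess : EssNonneg L) (hirr : Irred L)
    (hcol : ∀ k, ∑ j, L j k = 0)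
    (β γ : Fin n → ℝ) (hβ : ∀ j, 0 < β j) (hγ : ∀ j, 0 < γ j)
    (R : ℝ → ℝ)
    (hR : ∀ d : ℝ, R d = sSup {r : ℝ | ∃ v : Fin n → ℝ, v ≠ 0 ∧
      r = (∑ j, β j * v j ^ 2) /
        (-(d * ∑ j, ∑ k, L j k * v j * v k) + ∑ j, γ j * v j ^ 2)}) :
    Filter.Tendsto R (nhdsWithin 0 (Set.Ioi 0)) (nhds (⨆ j, β j / γ j)) ∧
      Filter.Tendsto R Filter.atTop (nhds ((∑ j, β j) / (∑ j, γ j))) := by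
  haveI : Nonempty (Fin n) := ⟨⟨0, hn⟩⟩
  have hn0 : ((n : ℝ)) ≠ 0 := Nat.cast_ne_zero.2 hn.ne'
  have hnpos : (0:ℝ) < (n:ℝ) := Nat.cast_pos.2 hn
  set M : ℝ := ⨆ j, β j / γ j with hM
  set s : ℝ := (∑ j, β j) / (∑ j, γ j) with hs
  set A : ℝ → Set ℝ := fun d => {r : ℝ | ∃ v : Fin n → ℝ, v ≠ 0 ∧
      r = (∑ j, β j * v j ^ 2) /
        (-(d * ∑ j, ∑ k, L j k * v j * v k) + ∑ j, γ j * v j ^ 2)} with hA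
  have hRA : ∀ d, R d = sSup (A d) := hR
  obtain ⟨j₀, hj₀⟩ := Finite.exists_max (fun j => β j / γ j)
  have hMeq : M = β j₀ / γ j₀ := by
    refine le_antisymm (ciSup_le hj₀) (le_ciSup (f := fun j => β j / γ j) (Set.Finite.bddAbove (Set.finite_range _)) j₀)
  have hMpos : 0 < M := by
    rw [hMeq]; exact div_pos (hβ j₀) (hγ j₀)
  have hβM : ∀ j, β j ≤ M * γ j := by
    intro j
    have := hj₀ j
    rw [← hMeq] at this
    exact (div_le_iff₀ (hγ j)).1 this
  -- positivity of denominators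
  have hGpos : ∀ v : Fin n → ℝ, v ≠ 0 → 0 < ∑ j, γ j * v j ^ 2 := by
    intro v hv
    obtain ⟨j, hj⟩ := Function.ne_iff.1 hv
    refine Finset.sum_pos' (fun i _ => mul_nonneg (hγ i).le (sq_nonneg _))
      ⟨j, Finset.mem_univ j, ?_⟩
    have : 0 < v j ^ 2 := lt_of_le_of_ne (sq_nonneg _) (Ne.symm (pow_ne_zero 2 hj))
    exact mul_pos (hγ j) this
  have hDpos : ∀ d : ℝ, 0 ≤ d → ∀ v : Fin n → ℝ, v ≠ 0 →
      0 < -(d * ∑ j, ∑ k, L j k * v j * v k) + ∑ j, γ j * v j ^ 2 := by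
    intro d hd v hv
    have h1 : 0 ≤ -(d * ∑ j, ∑ k, L j k * v j * v k) := by
      have := my_q_nonneg L hsym hess hcol v
      nlinarith
    linarith [hGpos v hv]
  -- upper bound by M
  have hub : ∀ d : ℝ, 0 ≤ d → ∀ r ∈ A d, r ≤ M := by
    intro d hd r hr
    obtain ⟨v, hv, rfl⟩ := hr
    rw [div_le_iff₀ (hDpos d hd v hv)]
    have h1 : ∑ j, β j * v j ^ 2 ≤ M * ∑ j, γ j * v j ^ 2 := by
      rw [Finset.mul_sum]
      exact Finset.sum_le_sum fun j _ => by
        have := hβM j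
        nlinarith [sq_nonneg (v j)]
    have h2 : 0 ≤ -(d * ∑ j, ∑ k, L j k * v j * v k) := by
      have := my_q_nonneg L hsym hess hcol v
      nlinarith
    nlinarith [hMpos]
  have hbdd : ∀ d : ℝ, 0 ≤ d → BddAbove (A d) := fun d hd => ⟨M, fun r hr => hub d hd r hr⟩
  -- constant vector membership
  have hone : (fun _ : Fin n => (1:ℝ)) ≠ 0 := by
    intro h
    exact one_ne_zero (congrFun h ⟨0, hn⟩)
  have hq1 : ∑ j, ∑ k, L j k = 0 := by
    rw [Finset.sum_congr rfl fun j _ => my_hrow L hsym hcol j]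
    simp
  have hsmem : ∀ d : ℝ, s ∈ A d := by
    intro d
    refine ⟨fun _ => 1, hone, ?_⟩
    simp only [one_pow, mul_one]
    rw [hq1, mul_zero, neg_zero, zero_add]
  have hsums : 0 < ∑ j, γ j := Finset.sum_pos (fun j _ => hγ j) Finset.univ_nonempty
  have hsumb : 0 < ∑ j, β j := Finset.sum_pos (fun j _ => hβ j) Finset.univ_nonempty
  have hspos : 0 < s := div_pos hsumb hsums
  have hsle : ∀ d : ℝ, 0 ≤ d → s ≤ R d := by
    intro d hd
    rw [hRA d]
    exact le_csSup (hbdd d hd) (hsmem d)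
  have hRleM : ∀ d : ℝ, 0 ≤ d → R d ≤ M := by
    intro d hd
    rw [hRA d]
    exact csSup_le ⟨s, hsmem d⟩ (hub d hd)
  constructor
  · -- limit at 0⁺
    set ev : Fin n → ℝ := fun i => if i = j₀ then 1 else 0 with hev
    have hevne : ev ≠ 0 := by
      intro h
      have := congrFun h j₀
      simp [hev] at this
    have hqe : ∑ j, ∑ k, L j k * ev j * ev k = L j₀ j₀ := by
      simp [hev, mul_ite, ite_mul, Finset.sum_ite_eq']
    have hNe : ∑ j, β j * ev j ^ 2 = β j₀ := by
      simp [hev, ite_pow, mul_ite, Finset.sum_ite_eq']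
    have hGe : ∑ j, γ j * ev j ^ 2 = γ j₀ := by
      simp [hev, ite_pow, mul_ite, Finset.sum_ite_eq']
    have hfmem : ∀ d : ℝ, β j₀ / (-(d * L j₀ j₀) + γ j₀) ∈ A d := by
      intro d
      exact ⟨ev, hevne, by rw [hqe, hNe, hGe]⟩
    have hflb : ∀ d : ℝ, 0 ≤ d → β j₀ / (-(d * L j₀ j₀) + γ j₀) ≤ R d := by
      intro d hd
      rw [hRA d]
      exact le_csSup (hbdd d hd) (hfmem d)
    have hft : Filter.Tendsto (fun d : ℝ => β j₀ / (-(d * L j₀ j₀) + γ j₀))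
        (nhdsWithin 0 (Set.Ioi 0)) (nhds M) := by
      have hca : ContinuousAt (fun d : ℝ => β j₀ / (-(d * L j₀ j₀) + γ j₀)) 0 := by
        refine ContinuousAt.div continuousAt_const (by fun_prop) ?_
        simp
        exact (hγ j₀).ne'
      have := hca.tendsto
      simp only [zero_mul, neg_zero, zero_add] at this
      rw [← hMeq] at this
      exact this.mono_left nhdsWithin_le_nhds
    refine tendsto_of_tendsto_of_tendsto_of_le_of_le' hft tendsto_const_nhds ?_ ?_
    · filter_upwards [self_mem_nhdsWithin] with d hd
      exact hflb d (le_of_lt hd)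
    · filter_upwards [self_mem_nhdsWithin] with d hd
      exact hRleM d (le_of_lt hd)
  · -- limit at ∞
    obtain ⟨lam, hlampos, hgap⟩ := my_gap L hn hsym hess hirr hcol
    obtain ⟨jm, hjm⟩ := Finite.exists_min γ
    set m : ℝ := γ jm with hm
    have hmpos : 0 < m := hγ jm
    obtain ⟨jc, hjc⟩ := Finite.exists_max (fun j => |β j - s * γ j|)
    set C2 : ℝ := |β jc - s * γ jc| with hC2
    have hC2nn : 0 ≤ C2 := abs_nonneg _
    set Csq : ℝ := ∑ j, (β j - s * γ j)^2 with hCsq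
    have hCsqnn : 0 ≤ Csq := Finset.sum_nonneg fun j _ => sq_nonneg _
    have hzero : ∑ j, (β j - s * γ j) = 0 := by
      rw [Finset.sum_sub_distrib, ← Finset.mul_sum, hs, div_mul_cancel₀ _ hsums.ne']
      ring
    have key : ∀ ε : ℝ, 0 < ε → ∃ d₀ : ℝ, ∀ d : ℝ, d₀ ≤ d → ∀ r ∈ A d, r ≤ s + ε := by
      intro ε hε
      refine ⟨max (max (2*C2/(ε*lam)) (2*Csq/(ε^2*m*(n:ℝ)*lam))) 1, fun d hd r hr => ?_⟩
      obtain ⟨v, hv, rfl⟩ := hr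
      have hd1 : (1:ℝ) ≤ d := le_trans (le_max_right _ _) hd
      have hdpos : (0:ℝ) < d := lt_of_lt_of_le one_pos hd1
      have hdC2 : C2 ≤ ε*lam*d/2 := by
        have h := le_trans (le_trans (le_max_left _ _) (le_max_left _ _)) hd
        rw [div_le_iff₀ (by positivity)] at h
        nlinarith
      have hdCsq : Csq ≤ ε^2*m*(n:ℝ)*lam*d/2 := by
        have h := le_trans (le_trans (le_max_right _ _) (le_max_left _ _)) hd
        rw [div_le_iff₀ (by positivity)] at h
        nlinarith
      set c : ℝ := (∑ j, v j) / n with hc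
      set w : Fin n → ℝ := fun j => v j - c with hw
      set e : ℝ := ∑ j, (w j)^2 with he
      have he0 : 0 ≤ e := Finset.sum_nonneg fun j _ => sq_nonneg _
      have hwsum : ∑ j, w j = 0 := by
        simp only [hw]
        rw [Finset.sum_sub_distrib, Finset.sum_const, Finset.card_univ, Fintype.card_fin, hc]
        rw [nsmul_eq_mul]
        field_simp
        ring
      have hveq : v = fun j => w j + c := funext fun j => by simp [hw]
      have hqvw : ∑ j, ∑ k, L j k * v j * v k = ∑ j, ∑ k, L j k * w j * w k := by
        conv_lhs => rw [hveq]
        exact my_shift L hsym hcol c w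
      have hvsq : ∑ j, v j ^ 2 = e + (n:ℝ)*c^2 := by
        have h1 : ∀ j, v j ^2 = w j ^2 + 2*c*(w j) + c^2 := fun j => by
          simp only [hw]; ring
        simp_rw [h1]
        rw [Finset.sum_add_distrib, Finset.sum_add_distrib, ← Finset.mul_sum, hwsum,
          Finset.sum_const, Finset.card_univ, Fintype.card_fin]
        simp [he]
      set T : ℝ := ∑ j, (β j - s * γ j) * w j with hT
      set U : ℝ := ∑ j, (β j - s * γ j) * (w j)^2 with hU
      have hgape : lam * e ≤ -(∑ j, ∑ k, L j k * w j * w k) := hgap w hwsum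
      have hGlow : m*e + m*((n:ℝ)*c^2) ≤ ∑ j, γ j * v j ^ 2 := by
        have h1 : m * ∑ j, v j ^2 ≤ ∑ j, γ j * v j ^ 2 := by
          rw [Finset.mul_sum]
          exact Finset.sum_le_sum fun j _ =>
            mul_le_mul_of_nonneg_right (hjm j) (sq_nonneg _)
        rw [hvsq] at h1
        nlinarith
      have hNsplit : ∑ j, β j * v j ^ 2
          = s * (∑ j, γ j * v j ^ 2) + ∑ j, (β j - s * γ j) * v j ^2 := by
        rw [Finset.mul_sum, ← Finset.sum_add_distrib]
        exact Finset.sum_congr rfl fun j _ => by ring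
      have hFsplit : ∑ j, (β j - s * γ j) * v j ^2 = U + 2*c*T := by
        have h1 : ∀ j, (β j - s * γ j) * v j ^2
            = (β j - s * γ j) * (w j)^2 + 2*c*((β j - s * γ j) * w j)
              + c^2*(β j - s * γ j) := fun j => by simp only [hw]; ring
        simp_rw [h1]
        rw [Finset.sum_add_distrib, Finset.sum_add_distrib, ← Finset.mul_sum,
          ← Finset.mul_sum, hzero, hT, hU]
        ring
      have hCS : T^2 ≤ Csq * e :=
        Finset.sum_mul_sq_le_sq_mul_sq Finset.univ (fun j => β j - s * γ j) w
      have hUle : U ≤ C2 * e := by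
        rw [hU, he, Finset.mul_sum]
        exact Finset.sum_le_sum fun j _ =>
          mul_le_mul_of_nonneg_right (le_trans (le_abs_self _) (hjc j)) (sq_nonneg _)
      -- AM-GM step
      set a : ℝ := ε * (m * (n:ℝ)) with ha
      have hapos : 0 < a := by positivity
      have hT2e : T^2 ≤ a*(ε*lam*d/2)*e := by
        refine le_trans hCS (le_trans (mul_le_mul_of_nonneg_right hdCsq he0) (le_of_eq ?_))
        rw [ha]; ring
      have key2 : (2*c*T)*a ≤ (a*c^2 + ε*lam*d/2*e)*a := by
        linarith only [sq_nonneg (a*c - T), hT2e]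
      have h2cT : 2*c*T ≤ a*c^2 + ε*lam*d/2*e := le_of_mul_le_mul_right key2 hapos
      have hUle2 : U ≤ ε*lam*d/2*e := le_trans hUle (mul_le_mul_of_nonneg_right hdC2 he0)
      have hF : U + 2*c*T ≤ ε*(d*(lam*e)) + ε*(m*((n:ℝ)*c^2)) := by
        rw [ha] at h2cT
        calc U + 2*c*T ≤ ε*lam*d/2*e + (ε*(m*(n:ℝ))*c^2 + ε*lam*d/2*e) :=
              add_le_add hUle2 h2cT
          _ = ε*(d*(lam*e)) + ε*(m*((n:ℝ)*c^2)) := by ring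
      -- assemble
      have hDv := hDpos d hdpos.le v hv
      rw [div_le_iff₀ hDv]
      have hqnnw : 0 ≤ -(∑ j, ∑ k, L j k * w j * w k) := my_q_nonneg L hsym hess hcol w
      have hdq : d*(lam*e) ≤ -(d * ∑ j, ∑ k, L j k * v j * v k) := by
        rw [hqvw]
        calc d*(lam*e) ≤ d * -(∑ j, ∑ k, L j k * w j * w k) :=
              mul_le_mul_of_nonneg_left hgape hdpos.le
          _ = -(d * ∑ j, ∑ k, L j k * w j * w k) := by ring
      have hGleD : (∑ j, γ j * v j ^ 2)
          ≤ -(d * ∑ j, ∑ k, L j k * v j * v k) + ∑ j, γ j * v j ^ 2 := by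
        rw [hqvw]
        have h : 0 ≤ d * -(∑ j, ∑ k, L j k * w j * w k) := mul_nonneg hdpos.le hqnnw
        linarith only [h]
      have hlame : 0 ≤ lam * e := mul_nonneg hlampos.le he0
      rw [hNsplit, hFsplit]
      have hsG : s * (∑ j, γ j * v j ^ 2)
          ≤ s * (-(d * ∑ j, ∑ k, L j k * v j * v k) + ∑ j, γ j * v j ^ 2) :=
        mul_le_mul_of_nonneg_left hGleD hspos.le
      have hFD : U + 2*c*T
          ≤ ε * (-(d * ∑ j, ∑ k, L j k * v j * v k) + ∑ j, γ j * v j ^ 2) := by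
        have hmnn : 0 ≤ m*e := mul_nonneg hmpos.le he0
        have hsum2 : d*(lam*e) + m*((n:ℝ)*c^2)
            ≤ -(d * ∑ j, ∑ k, L j k * v j * v k) + ∑ j, γ j * v j ^ 2 := by
          linarith only [hdq, hGlow, hmnn]
        calc U + 2*c*T ≤ ε*(d*(lam*e)) + ε*(m*((n:ℝ)*c^2)) := hF
          _ = ε*(d*(lam*e) + m*((n:ℝ)*c^2)) := by ring
          _ ≤ ε * (-(d * ∑ j, ∑ k, L j k * v j * v k) + ∑ j, γ j * v j ^ 2) :=
              mul_le_mul_of_nonneg_left hsum2 hε.le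
      linarith only [hsG, hFD]

    rw [Metric.tendsto_atTop]
    intro ε hε
    obtain ⟨d₀, hd₀⟩ := key (ε/2) (half_pos hε)
    refine ⟨max d₀ 1, fun d hd => ?_⟩
    have hdd0 : d₀ ≤ d := le_trans (le_max_left _ _) hd
    have hd1 : (1:ℝ) ≤ d := le_trans (le_max_right _ _) hd
    have hdpos : (0:ℝ) < d := lt_of_lt_of_le one_pos hd1
    have h1 : s ≤ R d := hsle d hdpos.le
    have h2 : R d ≤ s + ε/2 := by
      rw [hRA d]
      exact csSup_le ⟨s, hsmem d⟩ (hd₀ d hdd0)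
    rw [Real.dist_eq, abs_lt]
    constructor <;> linarith
end

section
/- Consider the ODE comparison system: let L be essentially nonnegative and irreducible with zero column sums, d > 0, and let v : [0,T] → ℝⁿ satisfy vⱼ'(t) ≤ d Σₖ L_{jk} vₖ(t) for all j and t ∈ (0,T], with v(0) ≤ 0 and v(0) ≠ 0. Then vⱼ(t) < 0 for all j and all t ∈ (0,T]. -/
open Matrix BigOperators Set Filter Topology

private lemma deriv_nonneg_of_isMax_right {f : ℝ → ℝ} {f' t₀ : ℝ}
    (h : HasDerivWithinAt f f' (Set.Icc 0 t₀) t₀) (ht₀ : 0 < t₀)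
    (hmax : ∀ s ∈ Set.Icc (0:ℝ) t₀, f s ≤ f t₀) : 0 ≤ f' := by
  rw [hasDerivWithinAt_iff_tendsto_slope] at h
  have hsub : Set.Ico (0:ℝ) t₀ ⊆ Set.Icc 0 t₀ \ {t₀} := fun x hx =>
    ⟨⟨hx.1, hx.2.le⟩, ne_of_lt hx.2⟩
  have h2 : Tendsto (slope f t₀) (𝓝[Set.Ico (0:ℝ) t₀] t₀) (𝓝 f') :=
    h.mono_left (nhdsWithin_mono _ hsub)
  have hne : (𝓝[Set.Ico (0:ℝ) t₀] t₀).NeBot := by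
    rw [← mem_closure_iff_nhdsWithin_neBot, closure_Ico (ne_of_lt ht₀)]
    exact ⟨ht₀.le, le_rfl⟩
  refine ge_of_tendsto h2 ?_
  filter_upwards [self_mem_nhdsWithin] with x hx
  have hx1 : f x ≤ f t₀ := hmax x ⟨hx.1, hx.2.le⟩
  have hx2 : x - t₀ < 0 := sub_neg.mpr hx.2
  rw [slope_def_field]
  exact div_nonneg_of_nonpos (by linarith) hx2.le

private lemma partA {n : ℕ} (L : Matrix (Fin n) (Fin n) ℝ)
    (hess : EssNonneg L) (d : ℝ) (hd : 0 < d) (T : ℝ) (hT : 0 < T)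
    (v v' : ℝ → Fin n → ℝ)
    (hderiv : ∀ j, ∀ t ∈ Set.Icc (0 : ℝ) T,
      HasDerivWithinAt (fun s => v s j) (v' t j) (Set.Icc (0 : ℝ) T) t)
    (hineq : ∀ j, ∀ t ∈ Set.Ioc (0 : ℝ) T, v' t j ≤ d * ∑ k, L j k * v t k)
    (hv0 : ∀ j, v 0 j ≤ 0) :
    ∀ j, ∀ t ∈ Set.Icc (0 : ℝ) T, v t j ≤ 0 := by
  set K : ℝ := d * (∑ j, ∑ k, |L j k|) + 1 with hKdef
  have habs : (0:ℝ) ≤ ∑ j, ∑ k, |L j k| :=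
    Finset.sum_nonneg fun j _ => Finset.sum_nonneg fun k _ => abs_nonneg _
  have hKpos : 0 < K := by positivity
  have hKrow : ∀ j, d * ∑ k, |L j k| < K := by
    intro j
    have h1 : ∑ k, |L j k| ≤ ∑ j, ∑ k, |L j k| :=
      Finset.single_le_sum (f := fun j => ∑ k, |L j k|)
        (fun i _ => Finset.sum_nonneg fun k _ => abs_nonneg _) (Finset.mem_univ j)
    nlinarith
  have hcont : ∀ j, ContinuousOn (fun s => v s j) (Set.Icc 0 T) := fun j t ht =>
    (hderiv j t ht).continuousWithinAt
  have key : ∀ ε : ℝ, 0 < ε → ∀ j, ∀ t ∈ Set.Icc (0:ℝ) T, v t j < ε * Real.exp (K * t) := by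
    intro ε hε
    set g : ℝ → ℝ := fun t => ε * Real.exp (K * t) with hgdef
    have hgpos : ∀ t, 0 < g t := fun t => mul_pos hε (Real.exp_pos _)
    have hgcont : Continuous g := by continuity
    set B : Set ℝ := {t | t ∈ Set.Icc (0:ℝ) T ∧ ∀ s ∈ Set.Icc (0:ℝ) t, ∀ j, v s j < g s}
      with hBdef
    have h0B : (0:ℝ) ∈ B := by
      refine ⟨⟨le_refl _, hT.le⟩, ?_⟩
      intro s hs j
      have hs0 : s = 0 := le_antisymm hs.2 hs.1
      rw [hs0]
      exact lt_of_le_of_lt (hv0 j) (hgpos 0)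
    have hBne : B.Nonempty := ⟨0, h0B⟩
    have hBbdd : BddAbove B := ⟨T, fun x hx => hx.1.2⟩
    set t₀ := sSup B with ht₀def
    have ht₀mem : t₀ ∈ Set.Icc (0:ℝ) T :=
      ⟨le_csSup hBbdd h0B, csSup_le hBne fun x hx => hx.1.2⟩
    have hlt : ∀ s, 0 ≤ s → s < t₀ → ∀ j, v s j < g s := by
      intro s hs0 hst j
      obtain ⟨x, hxB, hsx⟩ := exists_lt_of_lt_csSup hBne hst
      exact hxB.2 s ⟨hs0, hsx.le⟩ j
    have hle : ∀ j, v t₀ j ≤ g t₀ := by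
      intro j
      rcases eq_or_lt_of_le ht₀mem.1 with h0 | h0
      · rw [← h0]; exact (lt_of_le_of_lt (hv0 j) (hgpos 0)).le
      · have hcw : Tendsto (fun s => v s j - g s) (𝓝[Set.Ico (0:ℝ) t₀] t₀)
            (𝓝 (v t₀ j - g t₀)) := by
          have := ((hcont j).sub hgcont.continuousOn) t₀ ht₀mem
          exact this.mono_left (nhdsWithin_mono _
            (fun x hx => ⟨hx.1, hx.2.le.trans ht₀mem.2⟩))
        have hne : (𝓝[Set.Ico (0:ℝ) t₀] t₀).NeBot := by
          rw [← mem_closure_iff_nhdsWithin_neBot, closure_Ico (ne_of_lt h0)]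
          exact ⟨h0.le, le_rfl⟩
        have := le_of_tendsto hcw (by
          filter_upwards [self_mem_nhdsWithin] with x hx
          exact sub_nonpos.mpr (hlt x hx.1 hx.2 j).le)
        linarith [this]
    have hstrict : ∀ j, v t₀ j < g t₀ := by
      intro j
      rcases lt_or_eq_of_le (hle j) with h | heq
      · exact h
      · exfalso
        have h0 : 0 < t₀ := by
          rcases eq_or_lt_of_le ht₀mem.1 with h0 | h0
          · exfalso
            have := lt_of_le_of_lt (hv0 j) (hgpos 0)
            rw [← h0] at heq; linarith
          · exact h0
        -- derivative of the touching function
        have hgd : HasDerivAt g (g t₀ * K) t₀ := by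
          have h1 : HasDerivAt (fun t : ℝ => K * t) K t₀ := by
            simpa using (hasDerivAt_id t₀).const_mul K
          have h2 := h1.exp
          have h3 := h2.const_mul ε
          refine h3.congr_deriv ?_
          simp only [hgdef]; ring
        have hf : HasDerivWithinAt (fun s => v s j - g s) (v' t₀ j - g t₀ * K)
            (Set.Icc 0 t₀) t₀ :=
          ((hderiv j t₀ ht₀mem).sub hgd.hasDerivWithinAt).mono
            (Set.Icc_subset_Icc le_rfl ht₀mem.2)
        have hmax : ∀ s ∈ Set.Icc (0:ℝ) t₀, v s j - g s ≤ v t₀ j - g t₀ := by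
          intro s hs
          rw [heq]
          rcases lt_or_eq_of_le hs.2 with h | h
          · linarith [hlt s hs.1 h j]
          · rw [h, heq]
        have hd0 : 0 ≤ v' t₀ j - g t₀ * K := deriv_nonneg_of_isMax_right hf h0 hmax
        have hiq := hineq j t₀ ⟨h0, ht₀mem.2⟩
        have hsum : ∑ k, L j k * v t₀ k ≤ (∑ k, |L j k|) * g t₀ := by
          rw [Finset.sum_mul]
          refine Finset.sum_le_sum ?_
          intro k _
          by_cases hkj : k = j
          · rw [hkj, heq]
            exact mul_le_mul_of_nonneg_right (le_abs_self _) (hgpos _).le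
          · have h1 : 0 ≤ L j k := hess j k (fun h => hkj h.symm)
            calc L j k * v t₀ k ≤ L j k * g t₀ :=
                  mul_le_mul_of_nonneg_left (hle k) h1
              _ ≤ |L j k| * g t₀ :=
                  mul_le_mul_of_nonneg_right (le_abs_self _) (hgpos _).le
        have hrow := hKrow j
        have hgp := hgpos t₀
        nlinarith [mul_le_mul_of_nonneg_left hsum hd.le]
    have ht₀B : t₀ ∈ B := by
      refine ⟨ht₀mem, fun s hs j => ?_⟩
      rcases lt_or_eq_of_le hs.2 with h | h
      · exact hlt s hs.1 h j
      · rw [h]; exact hstrict j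
    have ht₀T : t₀ = T := by
      by_contra hne
      have hlt' : t₀ < T := lt_of_le_of_ne ht₀mem.2 hne
      have hev : ∀ᶠ s in 𝓝[Set.Icc (0:ℝ) T] t₀, ∀ j, v s j < g s := by
        rw [eventually_all]
        intro j
        have hcw : ContinuousWithinAt (fun s => v s j - g s) (Set.Icc (0:ℝ) T) t₀ :=
          ((hcont j).sub hgcont.continuousOn) t₀ ht₀mem
        have hneg : v t₀ j - g t₀ < 0 := sub_neg.mpr (hstrict j)
        have := hcw (Iio_mem_nhds hneg)
        filter_upwards [this] with x hx
        simpa [sub_neg] using hx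
      obtain ⟨U, hUopen, hUt₀, hUsub⟩ := mem_nhdsWithin.mp hev
      obtain ⟨δ, hδpos, hball⟩ := Metric.isOpen_iff.mp hUopen t₀ hUt₀
      set t₁ := min (t₀ + δ/2) T with ht₁def
      have ht₀t₁ : t₀ < t₁ := lt_min (by linarith) hlt'
      have ht₁B : t₁ ∈ B := by
        refine ⟨⟨le_trans ht₀mem.1 ht₀t₁.le, min_le_right _ _⟩, ?_⟩
        intro s hs j
        rcases le_or_gt s t₀ with h | h
        · exact ht₀B.2 s ⟨hs.1, h⟩ j
        · have hsU : s ∈ U := by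
            apply hball
            rw [Metric.mem_ball, Real.dist_eq, abs_of_pos (by linarith)]
            have : s ≤ t₀ + δ/2 := le_trans hs.2 (min_le_left _ _)
            linarith
          have hsIcc : s ∈ Set.Icc (0:ℝ) T := ⟨hs.1, hs.2.trans (min_le_right _ _)⟩
          exact hUsub ⟨hsU, hsIcc⟩ j
      have := le_csSup hBbdd ht₁B
      linarith
    intro j t ht
    exact ht₀B.2 t (by rw [ht₀T]; exact ht) j
  intro j t ht
  by_contra hpos
  push_neg at hpos
  set ε := v t j / (2 * Real.exp (K * t)) with hεdef
  have hεpos : 0 < ε := div_pos hpos (by positivity)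
  have h2 := key ε hεpos j t ht
  have h3 : ε * Real.exp (K * t) = v t j / 2 := by
    rw [hεdef]
    field_simp
  rw [h3] at h2
  linarith

theorem stmt_17 {n : ℕ} (L : Matrix (Fin n) (Fin n) ℝ)
    (hess : EssNonneg L) (hirr : Irred L) (hcol : ∀ k, ∑ j, L j k = 0)
    (d : ℝ) (hd : 0 < d) (T : ℝ) (hT : 0 < T)
    (v v' : ℝ → Fin n → ℝ)
    (hderiv : ∀ j, ∀ t ∈ Set.Icc (0 : ℝ) T,
      HasDerivWithinAt (fun s => v s j) (v' t j) (Set.Icc (0 : ℝ) T) t)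
    (hineq : ∀ j, ∀ t ∈ Set.Ioc (0 : ℝ) T,
      v' t j ≤ d * ∑ k, L j k * v t k)
    (hv0 : ∀ j, v 0 j ≤ 0) (hv0ne : v 0 ≠ 0) :
    ∀ j, ∀ t ∈ Set.Ioc (0 : ℝ) T, v t j < 0 := by
  have hA := partA L hess d hd T hT v v' hderiv hineq hv0
  have hcont : ∀ j, ContinuousOn (fun s => v s j) (Set.Icc 0 T) := fun j t ht =>
    (hderiv j t ht).continuousWithinAt
  -- propagation of strict negativity
  have hprop : ∀ j, ∀ s ∈ Set.Icc (0:ℝ) T, ∀ t ∈ Set.Icc (0:ℝ) T, s ≤ t →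
      v s j < 0 → v t j < 0 := by
    intro j s hs t ht hst hneg
    set a : ℝ := d * L j j with hadef
    have hanti : AntitoneOn (fun u => v u j * Real.exp (-a * u)) (Set.Icc 0 T) := by
      apply antitoneOn_of_hasDerivWithinAt_nonpos (convex_Icc 0 T)
        (f' := fun u => (v' u j - a * v u j) * Real.exp (-a * u))
      · exact (hcont j).mul
          ((Real.continuous_exp.comp (continuous_const.mul continuous_id)).continuousOn)
      · intro x hx
        rw [interior_Icc] at hx
        have hx' : x ∈ Set.Icc (0:ℝ) T := Set.Ioo_subset_Icc_self hx
        have h1 : HasDerivAt (fun s => v s j) (v' x j) x :=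
          (hderiv j x hx').hasDerivAt (Icc_mem_nhds hx.1 hx.2)
        have h2 : HasDerivAt (fun u : ℝ => Real.exp (-a * u)) (Real.exp (-a * x) * (-a)) x := by
          have := ((hasDerivAt_id x).const_mul (-a)).exp
          simpa using this
        have h3 := h1.mul h2
        apply HasDerivAt.hasDerivWithinAt
        refine h3.congr_deriv ?_
        ring
      · intro x hx
        rw [interior_Icc] at hx
        have hxIoc : x ∈ Set.Ioc (0:ℝ) T := ⟨hx.1, hx.2.le⟩
        have hx' : x ∈ Set.Icc (0:ℝ) T := Set.Ioo_subset_Icc_self hx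
        have h3 := hineq j x hxIoc
        have hsplit : ∑ k, L j k * v x k
            = L j j * v x j + ∑ k ∈ Finset.univ.erase j, L j k * v x k := by
          rw [← Finset.add_sum_erase Finset.univ (fun k => L j k * v x k) (Finset.mem_univ j)]
        have herase : ∑ k ∈ Finset.univ.erase j, L j k * v x k ≤ 0 := by
          refine Finset.sum_nonpos ?_
          intro k hk
          have hkj : k ≠ j := Finset.ne_of_mem_erase hk
          exact mul_nonpos_of_nonneg_of_nonpos (hess j k (Ne.symm hkj)) (hA k x hx')
        have h4 : v' x j - a * v x j ≤ 0 := by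
          rw [hadef]
          have : d * ∑ k, L j k * v x k ≤ d * (L j j * v x j) := by
            apply mul_le_mul_of_nonneg_left _ hd.le
            rw [hsplit]; linarith
          nlinarith
        exact mul_nonpos_of_nonpos_of_nonneg h4 (Real.exp_pos _).le
    have h6 : v t j * Real.exp (-a * t) ≤ v s j * Real.exp (-a * s) := hanti hs ht hst
    have h5 : v s j * Real.exp (-a * s) < 0 :=
      mul_neg_of_neg_of_pos hneg (Real.exp_pos _)
    nlinarith [Real.exp_pos (-a * t)]
  intro j t ht
  have htIcc : t ∈ Set.Icc (0:ℝ) T := ⟨ht.1.le, ht.2⟩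
  obtain ⟨j₀, hj₀⟩ : ∃ j₀, v 0 j₀ ≠ 0 := Function.ne_iff.mp hv0ne
  have hj₀neg : v 0 j₀ < 0 := lt_of_le_of_ne (hv0 j₀) hj₀
  by_contra hvt
  set S : Set (Fin n) := {k | v t k < 0} with hSdef
  have hSne : S.Nonempty :=
    ⟨j₀, hprop j₀ 0 ⟨le_refl 0, hT.le⟩ t htIcc ht.1.le hj₀neg⟩
  have hSuniv : S ≠ Set.univ := by
    intro h
    exact hvt (h ▸ Set.mem_univ j : j ∈ S)
  obtain ⟨p, hpS, k₀, hk₀S, hLpk⟩ := hirr S hSne hSuniv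
  have hpk₀ : p ≠ k₀ := by rintro rfl; exact hpS hk₀S
  have hLpos : 0 < L p k₀ := lt_of_le_of_ne (hess p k₀ hpk₀) (Ne.symm hLpk)
  -- v · p vanishes identically on [0, t]
  have hp0 : ∀ s ∈ Set.Icc (0:ℝ) t, v s p = 0 := by
    intro s hs
    have hsIcc : s ∈ Set.Icc (0:ℝ) T := ⟨hs.1, hs.2.trans ht.2⟩
    refine le_antisymm (hA p s hsIcc) ?_
    by_contra hneg
    push_neg at hneg
    exact hpS (hprop p s hsIcc t htIcc hs.2 hneg)
  -- find s₁ < t where v s₁ k₀ < 0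
  obtain ⟨s₁, hs₁, hs₁neg⟩ : ∃ s₁ ∈ Set.Ico (0:ℝ) t, v s₁ k₀ < 0 := by
    by_contra hcon
    push_neg at hcon
    have hzero : ∀ s ∈ Set.Ico (0:ℝ) t, v s k₀ = 0 := fun s hs =>
      le_antisymm (hA k₀ s ⟨hs.1, hs.2.le.trans ht.2⟩) (hcon s hs)
    have hcw : Tendsto (fun s => v s k₀) (𝓝[Set.Ico (0:ℝ) t] t) (𝓝 (v t k₀)) :=
      ((hcont k₀) t htIcc).mono_left (nhdsWithin_mono _
        (fun x hx => ⟨hx.1, hx.2.le.trans ht.2⟩))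
    have hne : (𝓝[Set.Ico (0:ℝ) t] t).NeBot := by
      rw [← mem_closure_iff_nhdsWithin_neBot, closure_Ico (ne_of_lt ht.1)]
      exact ⟨ht.1.le, le_rfl⟩
    have hcw0 : Tendsto (fun s => v s k₀) (𝓝[Set.Ico (0:ℝ) t] t) (𝓝 0) := by
      apply Tendsto.congr' _ tendsto_const_nhds
      filter_upwards [self_mem_nhdsWithin] with x hx
      exact (hzero x hx).symm
    have heq0 := tendsto_nhds_unique hcw hcw0
    have hk' : v t k₀ < 0 := hk₀S
    rw [heq0] at hk'
    exact lt_irrefl 0 hk'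
  set s₂ : ℝ := (s₁ + t) / 2 with hs₂def
  have hs₂1 : s₁ < s₂ := by rw [hs₂def]; linarith [hs₁.2]
  have hs₂t : s₂ < t := by rw [hs₂def]; linarith [hs₁.2]
  have hs₂pos : 0 < s₂ := by rw [hs₂def]; linarith [hs₁.1, ht.1]
  have hs₂Icct : s₂ ∈ Set.Icc (0:ℝ) t := ⟨hs₂pos.le, hs₂t.le⟩
  have hs₂Icc : s₂ ∈ Set.Icc (0:ℝ) T := ⟨hs₂pos.le, hs₂t.le.trans ht.2⟩
  have hs₂k₀ : v s₂ k₀ < 0 :=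
    hprop k₀ s₁ ⟨hs₁.1, hs₁.2.le.trans ht.2⟩ s₂ hs₂Icc hs₂1.le hs₁neg
  -- derivative of v · p at s₂ is 0
  have hz : HasDerivWithinAt (fun s => v s p) 0 (Set.Icc 0 t) s₂ := by
    have heq : Set.EqOn (fun s => v s p) (fun _ => (0:ℝ)) (Set.Icc 0 t) := fun s hs => hp0 s hs
    exact (hasDerivWithinAt_const s₂ _ 0).congr heq (hp0 s₂ hs₂Icct)
  have hz' : HasDerivWithinAt (fun s => v s p) (v' s₂ p) (Set.Icc 0 t) s₂ :=
    (hderiv p s₂ hs₂Icc).mono (Set.Icc_subset_Icc le_rfl ht.2)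
  have hudiff : UniqueDiffWithinAt ℝ (Set.Icc (0:ℝ) t) s₂ :=
    (uniqueDiffOn_Icc ht.1) s₂ hs₂Icct
  have hv'0 : v' s₂ p = 0 := by
    have e1 := hz'.derivWithin hudiff
    have e2 := hz.derivWithin hudiff
    exact e1.symm.trans e2
  -- the differential inequality at s₂ gives a contradiction
  have h6 := hineq p s₂ ⟨hs₂pos, hs₂t.le.trans ht.2⟩
  rw [hv'0] at h6
  have hsumneg : ∑ k, L p k * v s₂ k < 0 := by
    have h7 : ∀ k ∈ Finset.univ, L p k * v s₂ k ≤ (fun _ => (0:ℝ)) k := by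
      intro k _
      by_cases hk : k = p
      · rw [hk, hp0 s₂ hs₂Icct]; simp
      · exact mul_nonpos_of_nonneg_of_nonpos (hess p k (fun h => hk h.symm)) (hA k s₂ hs₂Icc)
    have h8 : ∃ k ∈ Finset.univ, L p k * v s₂ k < (fun _ => (0:ℝ)) k :=
      ⟨k₀, Finset.mem_univ _, mul_neg_of_pos_of_neg hLpos hs₂k₀⟩
    calc ∑ k, L p k * v s₂ k < ∑ _k : Fin n, (0:ℝ) := Finset.sum_lt_sum h7 h8
      _ = 0 := by simp
  nlinarith
end
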